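/- arXiv:1604.06936 — 11 statements merged into one kernel-verified Lean document; each statement's English description precedes it below -/
import Mathlib

section
/- If L is a suffix-free language over a finite alphabet Σ and u, v are nonempty words with L.v ≠ ∅, then L.v ≠ L.(uv). -/
/-- The left quotient of a language `L` by a word `w`: `L.w = {u : wu ∈ L}`. -/
def leftQuotient {σ : Type*} (L : Set (List σ)) (w : List σ) : Set (List σ) :=
  {u : List σ | w ++ u ∈ L}

/-- A language is prefix-free if no word of the language is a proper prefix
of another word of the language. -/
def PrefixFree {σ : Type*} (L : Set (List σ)) : Prop :=
  ∀ u ∈ L, ∀ v ∈ L, u <+: v → u = v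

/-- A language is suffix-free if no word of the language is a proper suffix
of another word of the language. -/
def SuffixFree {σ : Type*} (L : Set (List σ)) : Prop :=
  ∀ u ∈ L, ∀ v ∈ L, u <:+ v → u = v

theorem stmt2 {σ : Type*} [Fintype σ] (L : Set (List σ)) (hL : SuffixFree L)
    (u v : List σ) (hu : u ≠ []) (hv : v ≠ []) (hq : leftQuotient L v ≠ ∅) :
    leftQuotient L v ≠ leftQuotient L (u ++ v) := by
  intro heq
  obtain ⟨w, hw⟩ := Set.nonempty_iff_ne_empty.mpr hq
  have hw2 : w ∈ leftQuotient L (u ++ v) := heq ▸ hw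
  have h1 : v ++ w ∈ L := hw
  have h2 : (u ++ v) ++ w ∈ L := hw2
  have hs : v ++ w <:+ (u ++ v) ++ w := ⟨u, by simp⟩
  have := hL _ h1 _ h2 hs
  have : u = [] := by
    have hlen := congrArg List.length this
    simp at hlen
    exact hlen
  exact hu this
end

section
/- If L is a suffix-free language over a finite alphabet Σ such that the set of left quotients {L.w : w ∈ Σ*} is finite, then for every nonempty word w there exists k ≥ 1 such that L.(w^k) = ∅, where w^k denotes the k-fold concatenation of w with itself. -/
theorem stmt3 {σ : Type*} [Fintype σ] (L : Set (List σ)) (hL : SuffixFree L)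
    (hfin : {S : Set (List σ) | ∃ w : List σ, S = leftQuotient L w}.Finite) :
    ∀ w : List σ, w ≠ [] →
      ∃ k : ℕ, 1 ≤ k ∧ leftQuotient L (List.replicate k w).flatten = (∅ : Set (List σ)) := by
  intro w hw
  set f : ℕ → Set (List σ) := fun k => leftQuotient L (List.replicate (k + 1) w).flatten with hf
  have hninj : ¬ Function.Injective f := by
    intro hinj
    have hsub : Set.range f ⊆ {S : Set (List σ) | ∃ w : List σ, S = leftQuotient L w} := by
      rintro S ⟨k, rfl⟩
      exact ⟨_, rfl⟩
    exact Set.infinite_range_of_injective hinj (hfin.subset hsub)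
  rw [Function.not_injective_iff] at hninj
  obtain ⟨a, b, hab, hne⟩ := hninj
  -- wlog a < b
  obtain ⟨i, j, hij, heq⟩ : ∃ i j, i < j ∧ f i = f j := by
    rcases lt_or_gt_of_ne hne with h | h
    · exact ⟨a, b, h, hab⟩
    · exact ⟨b, a, h, hab.symm⟩
  refine ⟨i + 1, Nat.le_add_left 1 i, ?_⟩
  ext u
  simp only [Set.mem_empty_iff_false, iff_false]
  intro hu
  have hu' : u ∈ f j := heq ▸ hu
  have h1 : (List.replicate (i + 1) w).flatten ++ u ∈ L := hu
  have h2 : (List.replicate (j + 1) w).flatten ++ u ∈ L := hu'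
  have hsuf : (List.replicate (i + 1) w).flatten ++ u <:+ (List.replicate (j + 1) w).flatten ++ u := by
    refine ⟨(List.replicate (j - i) w).flatten, ?_⟩
    have hrep : j + 1 = (j - i) + (i + 1) := by omega
    rw [← List.append_assoc, ← List.flatten_append, ← List.replicate_add, ← hrep]
  have := hL _ h1 _ h2 hsuf
  have hlen := congrArg List.length this
  simp only [List.length_append, List.length_flatten, List.map_replicate,
    List.sum_replicate, smul_eq_mul] at hlen
  have hwpos : 0 < w.length := List.length_pos_iff.mpr hw
  have : i + 1 = j + 1 := by
    have := Nat.eq_of_mul_eq_mul_right hwpos (by omega : (i+1) * w.length = (j+1) * w.length)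
    omega
  omega
end

section
/- For every n ≥ 3, the cardinality of W≥6_bf(n) is (n−1)^{n−3} + (n−2)^{n−3} + (n−3)·2^{n−3}. -/
/-- The set of "middle" states `Q_M = {1, …, n−3}` of `Q = {0, …, n−1}`. -/
def QM (n : ℕ) : Set (Fin n) := {q : Fin n | 1 ≤ q.val ∧ q.val ≤ n - 3}

/-- The set `B_bf(n)` of transformations `t` of `Q = {0, …, n−1}` such that
`0` is not in the image of `t`, `(n−1)t = n−1`, `(n−2)t = n−1`, and for all
`j ≥ 1`, `0t^j = n−1` or `0t^j ≠ qt^j` for all `q` with `0 < q < n−1`. -/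
def Bbf (n : ℕ) (hn : 3 ≤ n) : Set (Fin n → Fin n) :=
  {t : Fin n → Fin n |
    (∀ q : Fin n, t q ≠ ⟨0, by omega⟩) ∧
    t ⟨n - 1, by omega⟩ = ⟨n - 1, by omega⟩ ∧
    t ⟨n - 2, by omega⟩ = ⟨n - 1, by omega⟩ ∧
    ∀ j : ℕ, 1 ≤ j →
      t^[j] ⟨0, by omega⟩ = ⟨n - 1, by omega⟩ ∨
        ∀ q : Fin n, 0 < q.val → q.val < n - 1 → t^[j] ⟨0, by omega⟩ ≠ t^[j] q}

/-- The set `W≥6_bf(n)`: transformations `t ∈ B_bf(n)` such that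
`0t ∈ {n−2, n−1}`, or `0t ∈ Q_M` and `qt ∈ {n−2, n−1}` for all `q ∈ Q_M`. -/
def Wbf6 (n : ℕ) (hn : 3 ≤ n) : Set (Fin n → Fin n) :=
  {t : Fin n → Fin n | t ∈ Bbf n hn ∧
    (t ⟨0, by omega⟩ = ⟨n - 2, by omega⟩ ∨ t ⟨0, by omega⟩ = ⟨n - 1, by omega⟩ ∨
      (t ⟨0, by omega⟩ ∈ QM n ∧
        ∀ q ∈ QM n, t q = ⟨n - 2, by omega⟩ ∨ t q = ⟨n - 1, by omega⟩))}

/-- The set `W≤5_bf(n)`: transformations `t ∈ B_bf(n)` such that for all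
distinct `p, q ∈ Q_M`, either `pt = qt = n−1` or `pt ≠ qt`. -/
def Wbf5 (n : ℕ) (hn : 3 ≤ n) : Set (Fin n → Fin n) :=
  {t : Fin n → Fin n | t ∈ Bbf n hn ∧
    ∀ p ∈ QM n, ∀ q ∈ QM n, p ≠ q →
      (t p = ⟨n - 1, by omega⟩ ∧ t q = ⟨n - 1, by omega⟩) ∨ t p ≠ t q}

/-- The (unordered) pair `{p, q}` of distinct states of `Q_M` is colliding in `T`:
there are `t ∈ T` and `r ∈ Q_M` with `0t = p` and `rt = q`. -/
def Colliding (n : ℕ) (hn : 3 ≤ n) (T : Set (Fin n → Fin n)) (p q : Fin n) : Prop :=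
  p ∈ QM n ∧ q ∈ QM n ∧ p ≠ q ∧
    ∃ t ∈ T, t ⟨0, by omega⟩ = p ∧ ∃ r ∈ QM n, t r = q

/-- A transformation `u` focuses the pair `{p, q}` of distinct states if
`pu = qu` and `pu ∈ Q_M ∪ {n−2}`. -/
def Focuses (n : ℕ) (hn : 3 ≤ n) (u : Fin n → Fin n) (p q : Fin n) : Prop :=
  p ≠ q ∧ u p = u q ∧ (u p ∈ QM n ∨ u p = ⟨n - 2, by omega⟩)

/-- `G` generates `W` as a semigroup: `W` is the set of all compositions
`g₁g₂⋯g_k` (apply `g₁` first) of nonempty finite sequences of elements of `G`. -/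
def Generates (n : ℕ) (G W : Set (Fin n → Fin n)) : Prop :=
  W = {t : Fin n → Fin n | ∃ l : List (Fin n → Fin n), l ≠ [] ∧ (∀ g ∈ l, g ∈ G) ∧
    t = l.foldl (fun a g => g ∘ a) id}

section Aux

variable (n : ℕ) (hn : 3 ≤ n)

/-- A family of constraint sets: value at `0` in `X`, values on middle states in `Y`,
values at `n-2`, `n-1` equal to `n-1`. -/
def Afam (X Y : Finset (Fin n)) : Fin n → Finset (Fin n) :=
  fun i => if i.val = 0 then X else if i.val < n - 2 then Y else {⟨n - 1, by omega⟩}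

lemma mem_Afam_iff (X Y : Finset (Fin n)) (t : Fin n → Fin n) :
    t ∈ Fintype.piFinset (Afam n hn X Y) ↔
      t ⟨0, by omega⟩ ∈ X ∧ (∀ q : Fin n, 0 < q.val → q.val < n - 2 → t q ∈ Y) ∧
      t ⟨n - 2, by omega⟩ = ⟨n - 1, by omega⟩ ∧
      t ⟨n - 1, by omega⟩ = ⟨n - 1, by omega⟩ := by
  rw [Fintype.mem_piFinset]
  constructor
  · intro h
    refine ⟨?_, ?_, ?_, ?_⟩
    · have := h ⟨0, by omega⟩
      simpa [Afam] using this
    · intro q h1 h2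
      have := h q
      simp only [Afam] at this
      rw [if_neg (by omega), if_pos h2] at this
      exact this
    · have := h ⟨n - 2, by omega⟩
      simp only [Afam] at this
      rw [if_neg (by omega), if_neg (by omega)] at this
      simpa using this
    · have := h ⟨n - 1, by omega⟩
      simp only [Afam] at this
      rw [if_neg (by omega), if_neg (by omega)] at this
      simpa using this
  · rintro ⟨hA, hB, hC, hD⟩ i
    simp only [Afam]
    split_ifs with h1 h2
    · have : i = ⟨0, by omega⟩ := Fin.ext h1
      rw [this]; exact hA
    · exact hB i (by omega) h2
    · have hi := i.isLt
      rcases (by omega : i.val = n - 2 ∨ i.val = n - 1) with h | h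
      · have : i = ⟨n - 2, by omega⟩ := Fin.ext h
        rw [this, hC]; simp
      · have : i = ⟨n - 1, by omega⟩ := Fin.ext h
        rw [this, hD]; simp

lemma card_piFinset_Afam (X Y : Finset (Fin n)) :
    (Fintype.piFinset (Afam n hn X Y)).card = X.card * Y.card ^ (n - 3) := by
  rw [Fintype.card_piFinset]
  have h1 : ∀ i : Fin n, (Afam n hn X Y i).card =
      (fun j => if j = 0 then X.card else if j < n - 2 then Y.card else 1) i.val := by
    intro i
    simp only [Afam]
    split_ifs <;> simp
  rw [(Finset.prod_congr rfl (fun i _ => h1 i)).trans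
    (Fin.prod_univ_eq_prod_range
      (fun j => if j = 0 then X.card else if j < n - 2 then Y.card else 1) n)]
  obtain ⟨k, rfl⟩ : ∃ k, n = k + 3 := ⟨n - 3, by omega⟩
  rw [Finset.prod_range_succ, Finset.prod_range_succ, Finset.prod_range_succ']
  have e2 : ∀ i ∈ Finset.range k,
      (fun j => if j = 0 then X.card else if j < k + 3 - 2 then Y.card else 1) (i + 1)
        = Y.card := by
    intro i hi
    simp only [Finset.mem_range] at hi
    simp only []
    rw [if_neg (by omega), if_pos (by omega)]
  rw [Finset.prod_congr rfl e2, Finset.prod_const, Finset.card_range]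
  have e3 : ¬(k + 1 < k + 3 - 2) := by omega
  have e4 : ¬(k + 2 < k + 3 - 2) := by omega
  have e5 : k + 3 - 3 = k := by omega
  have e6 : ¬(k + 1 = 0) := by omega
  have e7 : ¬(k + 2 = 0) := by omega
  simp only [if_true, if_neg e6, if_neg e3, if_neg e7, if_neg e4, mul_one, e5]
  ring

/-- The middle states as a finset. -/
def QMfin : Finset (Fin n) :=
  (Finset.Icc 1 (n - 3)).attachFin (fun m hm => by
    simp only [Finset.mem_Icc] at hm; omega)

lemma mem_QMfin_iff (q : Fin n) : q ∈ QMfin n hn ↔ 1 ≤ q.val ∧ q.val ≤ n - 3 := by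
  simp [QMfin, Finset.mem_attachFin, Finset.mem_Icc]

lemma card_QMfin : (QMfin n hn).card = n - 3 := by
  rw [QMfin, Finset.card_attachFin, Nat.card_Icc]
  omega

/-- Case A: `0 ↦ n-1`, middle states map anywhere except `0`. -/
def SA : Finset (Fin n → Fin n) :=
  Fintype.piFinset (Afam n hn {⟨n - 1, by omega⟩} ({⟨0, by omega⟩}ᶜ))

/-- Case B: `0 ↦ n-2`, middle states map anywhere except `0` and `n-2`. -/
def SB : Finset (Fin n → Fin n) :=
  Fintype.piFinset (Afam n hn {⟨n - 2, by omega⟩} ({⟨0, by omega⟩, ⟨n - 2, by omega⟩}ᶜ))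

/-- Case C: `0` maps to a middle state, middle states map into `{n-2, n-1}`. -/
def SC : Finset (Fin n → Fin n) :=
  Fintype.piFinset (Afam n hn (QMfin n hn) {⟨n - 2, by omega⟩, ⟨n - 1, by omega⟩})

lemma iter_eventually (t : Fin n → Fin n) (z a : Fin n) (c : ℕ) (hc : t^[c] z = a)
    (ha : t a = a) (j : ℕ) (hj : c ≤ j) : t^[j] z = a := by
  obtain ⟨i, rfl⟩ : ∃ i, j = i + c := ⟨j - c, by omega⟩
  rw [Function.iterate_add_apply, hc, Function.iterate_fixed ha]

lemma q_cases (q : Fin n) :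
    q = ⟨0, by omega⟩ ∨ (0 < q.val ∧ q.val < n - 2) ∨ q = ⟨n - 2, by omega⟩ ∨
      q = ⟨n - 1, by omega⟩ := by
  have hq := q.isLt
  rcases (by omega : q.val = 0 ∨ (0 < q.val ∧ q.val < n - 2) ∨ q.val = n - 2 ∨
      q.val = n - 1) with h | h | h | h
  · exact Or.inl (Fin.ext h)
  · exact Or.inr (Or.inl h)
  · exact Or.inr (Or.inr (Or.inl (Fin.ext h)))
  · exact Or.inr (Or.inr (Or.inr (Fin.ext h)))

set_option maxHeartbeats 1600000 in
lemma Wbf6_eq_union :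
    Wbf6 n hn = ↑(SA n hn) ∪ ↑(SB n hn) ∪ ↑(SC n hn) := by
  have hne10 : (⟨n - 1, by omega⟩ : Fin n) ≠ ⟨0, by omega⟩ := by
    simp [Fin.ext_iff]; omega
  have hne20 : (⟨n - 2, by omega⟩ : Fin n) ≠ ⟨0, by omega⟩ := by
    simp [Fin.ext_iff]; omega
  have hne12 : (⟨n - 1, by omega⟩ : Fin n) ≠ ⟨n - 2, by omega⟩ := by
    simp [Fin.ext_iff]; omega
  ext t
  simp only [Set.mem_union, Finset.mem_coe, SA, SB, SC, mem_Afam_iff]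
  constructor
  · rintro ⟨⟨h0, h1, h2, hj⟩, hw⟩
    rcases hw with hw | hw | ⟨hp, hq⟩
    · -- t 0 = n - 2 : case B
      refine Or.inl (Or.inr ⟨by simp [hw], ?_, h2, h1⟩)
      intro q hq1 hq2
      simp only [Finset.mem_compl, Finset.mem_insert, Finset.mem_singleton]
      push_neg
      refine ⟨h0 q, ?_⟩
      rcases hj 1 le_rfl with h | h
      · rw [Function.iterate_one, hw] at h
        exact absurd h hne12.symm
      · have := h q hq1 (by omega)
        rw [Function.iterate_one, hw] at this
        exact fun hc => this (hc ▸ rfl)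
    · -- t 0 = n - 1 : case A
      refine Or.inl (Or.inl ⟨by simp [hw], ?_, h2, h1⟩)
      intro q hq1 hq2
      simp only [Finset.mem_compl, Finset.mem_singleton]
      exact h0 q
    · -- t 0 ∈ QM : case C
      refine Or.inr ⟨?_, ?_, h2, h1⟩
      · rw [mem_QMfin_iff]; exact hp
      · intro q hq1 hq2
        have := hq q ⟨hq1, by omega⟩
        simp only [Finset.mem_insert, Finset.mem_singleton]
        tauto
  · intro h
    rcases h with (⟨hA, hB, hC, hD⟩ | ⟨hA, hB, hC, hD⟩) | ⟨hA, hB, hC, hD⟩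
    · -- case A
      rw [Finset.mem_singleton] at hA
      refine ⟨⟨?_, hD, hC, ?_⟩, Or.inr (Or.inl hA)⟩
      · intro q
        rcases q_cases n hn q with h | h | h | h
        · rw [h, hA]; exact hne10
        · have := hB q h.1 h.2
          simpa using this
        · rw [h, hC]; exact hne10
        · rw [h, hD]; exact hne10
      · intro j hj
        left
        refine iter_eventually n t _ _ 1 ?_ hD j hj
        rw [Function.iterate_one, hA]
    · -- case B
      rw [Finset.mem_singleton] at hA
      have hmid : ∀ q : Fin n, 0 < q.val → q.val < n - 2 →
          t q ≠ ⟨0, by omega⟩ ∧ t q ≠ ⟨n - 2, by omega⟩ := by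
        intro q h1 h2
        have := hB q h1 h2
        simp only [Finset.mem_compl, Finset.mem_insert, Finset.mem_singleton] at this
        push_neg at this
        exact this
      have h2z : t^[2] ⟨0, by omega⟩ = ⟨n - 1, by omega⟩ := by
        rw [Function.iterate_succ_apply', Function.iterate_one, hA, hC]
      refine ⟨⟨?_, hD, hC, ?_⟩, Or.inl hA⟩
      · intro q
        rcases q_cases n hn q with h | h | h | h
        · rw [h, hA]; exact hne20
        · exact (hmid q h.1 h.2).1
        · rw [h, hC]; exact hne10
        · rw [h, hD]; exact hne10
      · intro j hj
        rcases (by omega : j = 1 ∨ 2 ≤ j) with rfl | hj2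
        · right
          intro q hq1 hq2
          rw [Function.iterate_one, hA]
          rcases q_cases n hn q with h | h | h | h
          · exact absurd (h ▸ hq1) (by simp)
          · exact fun hc => (hmid q h.1 h.2).2 hc.symm
          · rw [h, hC]; exact hne12.symm
          · exact absurd hq2 (by rw [h]; simp)
        · exact Or.inl (iter_eventually n t _ _ 2 h2z hD j hj2)
    · -- case C
      rw [mem_QMfin_iff] at hA
      have hmid : ∀ q : Fin n, 0 < q.val → q.val < n - 2 →
          t q = ⟨n - 2, by omega⟩ ∨ t q = ⟨n - 1, by omega⟩ := by
        intro q h1 h2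
        have := hB q h1 h2
        simpa using this
      have htt : ∀ q : Fin n, 0 < q.val → q.val < n - 1 →
          t (t q) = ⟨n - 1, by omega⟩ := by
        intro q h1 h2
        rcases q_cases n hn q with h | h | h | h
        · exact absurd (h ▸ h1) (by simp)
        · rcases hmid q h.1 h.2 with h' | h' <;> rw [h']
          · exact hC
          · exact hD
        · rw [h, hC, hD]
        · exact absurd h2 (by rw [h]; simp)
      have hmid0 : 0 < (t ⟨0, by omega⟩).val ∧ (t ⟨0, by omega⟩).val < n - 2 :=
        ⟨by omega, by omega⟩
      have h3z : t^[3] ⟨0, by omega⟩ = ⟨n - 1, by omega⟩ := by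
        rw [Function.iterate_succ_apply', Function.iterate_succ_apply',
          Function.iterate_one]
        exact htt _ hmid0.1 (by omega)
      refine ⟨⟨?_, hD, hC, ?_⟩, Or.inr (Or.inr ⟨hA, ?_⟩)⟩
      · intro q
        rcases q_cases n hn q with h | h | h | h
        · rw [h]
          intro hc
          rw [hc] at hA
          simp at hA <;> omega
        · rcases hmid q h.1 h.2 with h' | h' <;> rw [h']
          · exact hne20
          · exact hne10
        · rw [h, hC]; exact hne10
        · rw [h, hD]; exact hne10
      · intro j hj
        rcases (by omega : j = 1 ∨ j = 2 ∨ 3 ≤ j) with rfl | rfl | hj3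
        · right
          intro q hq1 hq2
          rw [Function.iterate_one]
          rcases q_cases n hn q with h | h | h | h
          · exact absurd (h ▸ hq1) (by simp)
          · rcases hmid q h.1 h.2 with h' | h' <;> rw [h'] <;>
              · intro hc
                rw [hc] at hA
                simp at hA <;> omega
          · rw [h, hC]
            intro hc
            rw [hc] at hA
            simp at hA <;> omega
          · exact absurd hq2 (by rw [h]; simp)
        · have h2z : t^[2] ⟨0, by omega⟩ = t (t ⟨0, by omega⟩) := by
            rw [Function.iterate_succ_apply', Function.iterate_one]
          rcases hmid _ hmid0.1 hmid0.2 with h' | h'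
          · right
            intro q hq1 hq2
            rw [h2z, h']
            have h2q : t^[2] q = t (t q) := by
              rw [Function.iterate_succ_apply', Function.iterate_one]
            rw [h2q, htt q hq1 hq2]
            exact hne12.symm
          · left
            rw [h2z, h']
        · exact Or.inl (iter_eventually n t _ _ 3 h3z hD j hj3)
      · intro q hq
        exact hmid q (by exact hq.1) (by have := hq.2; omega)

lemma disj_AB : Disjoint (↑(SA n hn) : Set (Fin n → Fin n)) ↑(SB n hn) := by
  rw [Set.disjoint_left]
  intro t hA hB
  simp only [Finset.mem_coe, SA, SB, mem_Afam_iff] at hA hB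
  have h1 := hA.1
  have h2 := hB.1
  rw [Finset.mem_singleton] at h1 h2
  rw [h1] at h2
  simp [Fin.ext_iff] at h2
  omega

lemma disj_ABC :
    Disjoint ((↑(SA n hn) : Set (Fin n → Fin n)) ∪ ↑(SB n hn)) ↑(SC n hn) := by
  rw [Set.disjoint_left]
  intro t hAB hC
  simp only [Set.mem_union, Finset.mem_coe, SA, SB, SC, mem_Afam_iff] at hAB hC
  have h2 := hC.1
  rw [mem_QMfin_iff] at h2
  rcases hAB with h | h
  all_goals
    have h1 := h.1
    rw [Finset.mem_singleton] at h1
    rw [h1] at h2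
    simp only [Fin.val_mk] at h2
    omega

lemma card_compl_single (a : Fin n) : ({a}ᶜ : Finset (Fin n)).card = n - 1 := by
  rw [Finset.card_compl, Finset.card_singleton, Fintype.card_fin]

lemma card_pair {a b : Fin n} (hab : a ≠ b) : ({a, b} : Finset (Fin n)).card = 2 := by
  rw [Finset.card_insert_of_notMem (by simpa using hab), Finset.card_singleton]

lemma card_compl_pair {a b : Fin n} (hab : a ≠ b) :
    ({a, b}ᶜ : Finset (Fin n)).card = n - 2 := by
  rw [Finset.card_compl, card_pair n hab, Fintype.card_fin]

lemma cardSA : (SA n hn).card = 1 * (n - 1) ^ (n - 3) := by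
  rw [SA, card_piFinset_Afam, Finset.card_singleton, card_compl_single]

lemma cardSB : (SB n hn).card = 1 * (n - 2) ^ (n - 3) := by
  rw [SB, card_piFinset_Afam, Finset.card_singleton,
    card_compl_pair n (by simp only [ne_eq, Fin.ext_iff, Fin.val_mk]; omega)]

lemma cardSC : (SC n hn).card = (n - 3) * 2 ^ (n - 3) := by
  rw [SC, card_piFinset_Afam, card_QMfin,
    card_pair n (by simp only [ne_eq, Fin.ext_iff, Fin.val_mk]; omega)]


end Aux

theorem stmt5 (n : ℕ) (hn : 3 ≤ n) :
    (Wbf6 n hn).ncard =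
      (n - 1) ^ (n - 3) + (n - 2) ^ (n - 3) + (n - 3) * 2 ^ (n - 3) := by
  have hd1 : Disjoint (SA n hn) (SB n hn) := by
    rw [← Finset.disjoint_coe]; exact disj_AB n hn
  have hd2 : Disjoint (SA n hn ∪ SB n hn) (SC n hn) := by
    rw [← Finset.disjoint_coe, Finset.coe_union]; exact disj_ABC n hn
  have e : Wbf6 n hn = ↑(SA n hn ∪ SB n hn ∪ SC n hn) := by
    rw [Wbf6_eq_union n hn, Finset.coe_union, Finset.coe_union]
  rw [e, Set.ncard_coe_finset, Finset.card_union_of_disjoint hd2,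
    Finset.card_union_of_disjoint hd1, cardSA n hn, cardSB n hn, cardSC n hn]
  ring
end

section
/- For every n ≥ 3, W≥6_bf(n) equals the union of the following three sets of transformations of Q: (1) all t with 0t = (n−2)t = (n−1)t = n−1 and qt ∈ Q∖{0} for every q ∈ Q_M; (2) all t with 0t = n−2, (n−2)t = (n−1)t = n−1 and qt ∈ Q∖{0, n−2} for every q ∈ Q_M; (3) all t with 0t ∈ Q_M, (n−2)t = (n−1)t = n−1 and qt ∈ {n−2, n−1} for every q ∈ Q_M. -/
set_option maxHeartbeats 1600000 in
theorem stmt6 (n : ℕ) (hn : 3 ≤ n) :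
    Wbf6 n hn =
      {t : Fin n → Fin n |
        t ⟨0, by omega⟩ = ⟨n - 1, by omega⟩ ∧
        t ⟨n - 2, by omega⟩ = ⟨n - 1, by omega⟩ ∧
        t ⟨n - 1, by omega⟩ = ⟨n - 1, by omega⟩ ∧
        ∀ q ∈ QM n, t q ≠ ⟨0, by omega⟩} ∪
      {t : Fin n → Fin n |
        t ⟨0, by omega⟩ = ⟨n - 2, by omega⟩ ∧
        t ⟨n - 2, by omega⟩ = ⟨n - 1, by omega⟩ ∧
        t ⟨n - 1, by omega⟩ = ⟨n - 1, by omega⟩ ∧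
        ∀ q ∈ QM n, t q ≠ ⟨0, by omega⟩ ∧ t q ≠ ⟨n - 2, by omega⟩} ∪
      {t : Fin n → Fin n |
        t ⟨0, by omega⟩ ∈ QM n ∧
        t ⟨n - 2, by omega⟩ = ⟨n - 1, by omega⟩ ∧
        t ⟨n - 1, by omega⟩ = ⟨n - 1, by omega⟩ ∧
        ∀ q ∈ QM n, t q = ⟨n - 2, by omega⟩ ∨ t q = ⟨n - 1, by omega⟩} := by

  ext t
  simp only [Set.mem_union, Set.mem_setOf_eq, Wbf6, Bbf, Set.mem_setOf_eq]
  constructor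
  · rintro ⟨⟨h0, hfix1, hfix2, hj⟩, hcase⟩
    rcases hcase with h | h | ⟨hm, hq⟩
    · -- 0t = n-2
      left; right
      refine ⟨h, hfix2, hfix1, fun q hqm => ⟨h0 q, ?_⟩⟩
      have h1 := hj 1 le_rfl
      simp only [Function.iterate_one] at h1
      rcases h1 with hh | hh
      · rw [h] at hh
        exact absurd hh (by simp [Fin.ext_iff]; omega)
      · intro hc
        exact hh q (by have := hqm.1; omega) (by have := hqm.1; have := hqm.2; omega) (h.trans hc.symm)
    · left; left; exact ⟨h, hfix2, hfix1, fun q _ => h0 q⟩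
    · right; exact ⟨hm, hfix2, hfix1, hq⟩
  · have hne01 : (⟨n - 1, by omega⟩ : Fin n) ≠ ⟨0, by omega⟩ := by
      simp [Fin.ext_iff]; omega
    rintro ((⟨h0, h2, h1, hq⟩ | ⟨h0, h2, h1, hq⟩) | ⟨h0, h2, h1, hq⟩)
    · -- case 1: t 0 = n-1
      have key : ∀ k, t^[k + 1] ⟨0, by omega⟩ = ⟨n - 1, by omega⟩ := by
        intro k; induction k with
        | zero => simpa using h0
        | succ k ih => rw [Function.iterate_succ_apply', ih, h1]
      refine ⟨⟨?_, h1, h2, ?_⟩, Or.inr (Or.inl h0)⟩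
      · intro q
        by_cases e0 : q.val = 0
        · rw [show q = ⟨0, by omega⟩ from Fin.ext e0, h0]; exact hne01
        by_cases e1 : q.val = n - 1
        · rw [show q = ⟨n - 1, by omega⟩ from Fin.ext e1, h1]; exact hne01
        by_cases e2 : q.val = n - 2
        · rw [show q = ⟨n - 2, by omega⟩ from Fin.ext e2, h2]; exact hne01
        · exact hq q ⟨by omega, by omega⟩
      · intro j hj1
        obtain ⟨k, rfl⟩ : ∃ k, j = k + 1 := ⟨j - 1, by omega⟩
        exact Or.inl (key k)
    · -- case 2: t 0 = n-2
      have key : ∀ k, t^[k + 2] ⟨0, by omega⟩ = ⟨n - 1, by omega⟩ := by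
        intro k; induction k with
        | zero =>
          have e : t^[0 + 2] (⟨0, by omega⟩ : Fin n) = t (t ⟨0, by omega⟩) := rfl
          rw [e, h0, h2]
        | succ k ih => rw [Function.iterate_succ_apply', ih, h1]
      refine ⟨⟨?_, h1, h2, ?_⟩, Or.inl h0⟩
      · intro q
        by_cases e0 : q.val = 0
        · rw [show q = ⟨0, by omega⟩ from Fin.ext e0, h0]; simp [Fin.ext_iff]; omega
        by_cases e1 : q.val = n - 1
        · rw [show q = ⟨n - 1, by omega⟩ from Fin.ext e1, h1]; exact hne01
        by_cases e2 : q.val = n - 2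
        · rw [show q = ⟨n - 2, by omega⟩ from Fin.ext e2, h2]; exact hne01
        · exact (hq q ⟨by omega, by omega⟩).1
      · intro j hj1
        by_cases hj2 : j = 1
        · subst hj2
          right
          intro q hq1 hq2 hc
          simp only [Function.iterate_one] at hc
          by_cases e2 : q.val = n - 2
          · rw [show q = ⟨n - 2, by omega⟩ from Fin.ext e2, h2, h0] at hc
            exact absurd hc (by simp [Fin.ext_iff]; omega)
          · exact (hq q ⟨by omega, by omega⟩).2 (hc.symm.trans h0)
        · obtain ⟨k, rfl⟩ : ∃ k, j = k + 2 := ⟨j - 2, by omega⟩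
          exact Or.inl (key k)
    · -- case 3: t 0 ∈ QM
      have htq : ∀ q : Fin n, 0 < q.val → q.val < n - 1 →
          t q = ⟨n - 2, by omega⟩ ∨ t q = ⟨n - 1, by omega⟩ := by
        intro q hq1 hq2
        by_cases e2 : q.val = n - 2
        · rw [show q = ⟨n - 2, by omega⟩ from Fin.ext e2, h2]; exact Or.inr rfl
        · exact hq q ⟨by omega, by omega⟩
      have ht2 : ∀ q : Fin n, 0 < q.val → q.val < n - 1 →
          t^[2] q = ⟨n - 1, by omega⟩ := by
        intro q hq1 hq2
        have e : t^[2] q = t (t q) := rfl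
        rw [e]
        rcases htq q hq1 hq2 with h | h <;> rw [h]
        · exact h2
        · exact h1
      have h20 : t^[2] ⟨0, by omega⟩ = ⟨n - 2, by omega⟩ ∨
          t^[2] ⟨0, by omega⟩ = ⟨n - 1, by omega⟩ := by
        have e : t^[2] (⟨0, by omega⟩ : Fin n) = t (t ⟨0, by omega⟩) := rfl
        rw [e]
        exact htq _ (by have := h0.1; omega) (by have := h0.2; omega)
      have key : ∀ k, t^[k + 3] ⟨0, by omega⟩ = ⟨n - 1, by omega⟩ := by
        intro k; induction k with
        | zero =>
          have e : t^[0 + 3] (⟨0, by omega⟩ : Fin n) = t (t^[2] ⟨0, by omega⟩) :=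
            Function.iterate_succ_apply' t 2 _
          rw [e]
          rcases h20 with h | h <;> rw [h]
          · exact h2
          · exact h1
        | succ k ih =>
          have e : t^[k + 1 + 3] (⟨0, by omega⟩ : Fin n) =
              t (t^[k + 3] ⟨0, by omega⟩) := Function.iterate_succ_apply' t (k + 3) _
          rw [e, ih, h1]
      refine ⟨⟨?_, h1, h2, ?_⟩, Or.inr (Or.inr ⟨h0, hq⟩)⟩
      · intro q
        by_cases e0 : q.val = 0
        · rw [show q = ⟨0, by omega⟩ from Fin.ext e0]
          intro hc; rw [hc] at h0; exact absurd h0.1 (by simp)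
        by_cases e1 : q.val = n - 1
        · rw [show q = ⟨n - 1, by omega⟩ from Fin.ext e1, h1]; exact hne01
        · rcases htq q (by omega) (by omega) with h | h <;> rw [h] <;>
            simp [Fin.ext_iff] <;> omega
      · intro j hj1
        by_cases e1 : j = 1
        · subst e1
          right
          intro q hq1 hq2 hc
          simp only [Function.iterate_one] at hc
          have h2v := h0.2
          rcases htq q hq1 hq2 with h | h <;> rw [h] at hc <;> rw [hc] at h2v
          · exact absurd (show (n - 2 : ℕ) ≤ n - 3 from h2v) (by omega)
          · exact absurd (show (n - 1 : ℕ) ≤ n - 3 from h2v) (by omega)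
        by_cases e2 : j = 2
        · subst e2
          rcases h20 with h | h
          · right
            intro q hq1 hq2 hc
            rw [h, ht2 q hq1 hq2] at hc
            exact absurd hc (by simp [Fin.ext_iff]; omega)
          · exact Or.inl h
        · obtain ⟨k, rfl⟩ : ∃ k, j = k + 3 := ⟨j - 3, by omega⟩
          exact Or.inl (key k)
end

section
/- Let n ≥ 3 and let T be a set of transformations of Q with T ⊆ B_bf(n) such that no pair of distinct states of Q_M is colliding in T. Then T ⊆ W≥6_bf(n). -/
theorem stmt7 (n : ℕ) (hn : 3 ≤ n) (T : Set (Fin n → Fin n))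
    (hTB : T ⊆ Bbf n hn)
    (hcol : ∀ p q : Fin n, ¬ Colliding n hn T p q) :
    T ⊆ Wbf6 n hn := by
  intro t ht
  obtain ⟨h0, h1, h2, hj⟩ := hTB ht
  refine ⟨hTB ht, ?_⟩
  by_cases hc2 : t ⟨0, by omega⟩ = ⟨n - 2, by omega⟩
  · exact Or.inl hc2
  by_cases hc1 : t ⟨0, by omega⟩ = ⟨n - 1, by omega⟩
  · exact Or.inr (Or.inl hc1)
  right; right
  have ha0 : t ⟨0, by omega⟩ ≠ ⟨0, by omega⟩ := h0 _
  have hv : (t ⟨0, by omega⟩).val < n := (t ⟨0, by omega⟩).isLt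
  simp only [Fin.ext_iff, ne_eq] at ha0 hc1 hc2
  have haM : t ⟨0, by omega⟩ ∈ QM n := ⟨by omega, by omega⟩
  refine ⟨haM, ?_⟩
  intro q hq
  by_contra hcon
  push_neg at hcon
  obtain ⟨hq2, hq1⟩ := hcon
  have hq0 : t q ≠ ⟨0, by omega⟩ := h0 q
  have hvq : (t q).val < n := (t q).isLt
  simp only [Fin.ext_iff, ne_eq] at hq0 hq1 hq2
  have hqM : t q ∈ QM n := ⟨by omega, by omega⟩
  by_cases heq : t q = t ⟨0, by omega⟩
  · rcases hj 1 le_rfl with h | h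
    · rw [Function.iterate_one] at h
      have h' : (t ⟨0, by omega⟩).val = n - 1 := by rw [h]
      obtain ⟨_, h3⟩ := haM
      omega
    · exact h q (by exact_mod_cast hq.1) (by have := hq.2; omega) (by
        simp only [Function.iterate_one]; exact heq.symm)
  · exact hcol (t ⟨0, by omega⟩) (t q)
      ⟨haM, hqM, fun h => heq h.symm, t, ht, rfl, q, hq, rfl⟩
end

section
/- For every n ≥ 3, the set W≤5_bf(n) is closed under composition of transformations; no element of W≤5_bf(n) focuses any pair of distinct states of Q_M; and every pair of distinct states of Q_M is colliding in W≤5_bf(n). -/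
/-!
Every element of `W≤5_bf(n)` is injective away from the sink `n−1`: two distinct states are
merged only into `n−1`. For `t ∈ B_bf(n)` this is the whole content of the defining condition of
`W≤5_bf(n)`, since `n−2` and `n−1` both go to the sink and the condition of `B_bf(n)` for `j = 1`
keeps `0t` apart from every other image outside the sink. Maps that are injective away from a
fixed sink are closed under composition, hence under iteration, which gives the conditions of
`B_bf(n)` for all `j` at once. So `W≤5_bf(n)` is a semigroup, none of its elements focuses a
pair, and `{p, q}` collides via the map `0 ↦ p`, `p ↦ q`, everything else `↦ n−1`.
-/

def InjOffSink {α : Type*} (z : α) (u : α → α) : Prop :=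
  ∀ p q, p ≠ q → u p = u q → u p = z

namespace InjOffSink

variable {α : Type*} {z : α}

theorem comp {s t : α → α} (hs : InjOffSink z s) (ht : InjOffSink z t) (htz : t z = z) :
    InjOffSink z (t ∘ s) := by
  intro p q hpq h
  by_cases hs_pq : s p = s q
  · simp only [Function.comp_apply, hs p q hpq hs_pq, htz]
  · exact ht (s p) (s q) hs_pq h

theorem iterate {v : α → α} (hv : InjOffSink z v) (hvz : v z = z) (j : ℕ) :
    InjOffSink z v^[j] := by
  induction j with
  | zero => exact fun p q hpq h => absurd h hpq
  | succ k ih => rw [Function.iterate_succ']; exact ih.comp hv hvz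

theorem update_update [DecidableEq α] {a b p q : α} (hpq : p ≠ q) :
    InjOffSink z (Function.update (Function.update (fun _ => z) a p) b q) := by
  intro x y hxy h
  simp only [Function.update_apply] at h ⊢
  split_ifs at h ⊢ <;> simp_all

end InjOffSink

section Wbf5

variable {n : ℕ} (hn : 3 ≤ n)

theorem apply_eq_last_of_le {t : Fin n → Fin n}
    (hlast : t ⟨n - 1, by omega⟩ = ⟨n - 1, by omega⟩)
    (hpen : t ⟨n - 2, by omega⟩ = ⟨n - 1, by omega⟩) {x : Fin n} (hx : n - 2 ≤ x.val) :
    t x = ⟨n - 1, by omega⟩ := by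
  rcases (show x.val = n - 2 ∨ x.val = n - 1 by omega) with h | h
  · rwa [show x = ⟨n - 2, by omega⟩ from Fin.ext h]
  · rwa [show x = ⟨n - 1, by omega⟩ from Fin.ext h]

theorem injOffSink_of_mem_Wbf5 {t : Fin n → Fin n} (ht : t ∈ Wbf5 n hn) :
    InjOffSink ⟨n - 1, by omega⟩ t := by
  obtain ⟨⟨-, hlast, hpen, horbit⟩, hmid⟩ := ht
  intro p q hpq h
  wlog hle : p.val ≤ q.val generalizing p q
  · rw [h]; exact this q p hpq.symm h.symm (by omega)
  have hlt : p.val < q.val := lt_of_le_of_ne hle (Fin.val_ne_of_ne hpq)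
  by_cases hq : n - 2 ≤ q.val
  · rw [h]; exact apply_eq_last_of_le hn hlast hpen hq
  by_cases hp : p.val = 0
  · have hp0 : p = ⟨0, by omega⟩ := Fin.ext hp
    rcases horbit 1 le_rfl with h0 | hsep
    · simpa [hp0] using h0
    · exact absurd (hp0 ▸ h) (hsep q (by omega) (by omega))
  · rcases hmid p ⟨by omega, by omega⟩ q ⟨by omega, by omega⟩ hpq with ⟨hp_last, -⟩ | hne
    · exact hp_last
    · exact absurd h hne

theorem mem_Wbf5_iff {t : Fin n → Fin n} :
    t ∈ Wbf5 n hn ↔ (∀ q, t q ≠ ⟨0, by omega⟩) ∧ t ⟨n - 1, by omega⟩ = ⟨n - 1, by omega⟩ ∧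
      t ⟨n - 2, by omega⟩ = ⟨n - 1, by omega⟩ ∧ InjOffSink ⟨n - 1, by omega⟩ t := by
  refine ⟨fun ht => ⟨ht.1.1, ht.1.2.1, ht.1.2.2.1, injOffSink_of_mem_Wbf5 hn ht⟩, ?_⟩
  rintro ⟨hzero, hlast, hpen, hinj⟩
  refine ⟨⟨hzero, hlast, hpen, fun j _ => ?_⟩, fun p _ q _ hpq => ?_⟩
  · refine or_iff_not_imp_left.2 fun h0 q hq _ h => h0 ?_
    exact hinj.iterate hlast j _ q (Fin.ne_of_val_ne (by simp; omega)) h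
  · by_cases h : t p = t q
    · exact .inl ⟨hinj p q hpq h, h ▸ hinj p q hpq h⟩
    · exact .inr h

theorem comp_mem_Wbf5 {s t : Fin n → Fin n} (hs : s ∈ Wbf5 n hn) (ht : t ∈ Wbf5 n hn) :
    t ∘ s ∈ Wbf5 n hn := by
  obtain ⟨-, hs_last, hs_pen, hs⟩ := (mem_Wbf5_iff hn).1 hs
  obtain ⟨ht_zero, ht_last, ht_pen, ht⟩ := (mem_Wbf5_iff hn).1 ht
  exact (mem_Wbf5_iff hn).2 ⟨fun q => ht_zero (s q), by simp [hs_last, ht_last],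
    by simp [hs_pen, ht_last], hs.comp ht ht_last⟩

theorem exists_mem_Wbf5_apply_zero_eq {p q : Fin n} (hp : p ∈ QM n) (hq : q ≠ ⟨0, by omega⟩)
    (hpq : p ≠ q) : ∃ t ∈ Wbf5 n hn, t ⟨0, by omega⟩ = p ∧ t p = q := by
  obtain ⟨hp1, hp3⟩ := hp
  have hp0 : p ≠ ⟨0, by omega⟩ := Fin.ne_of_val_ne (show p.val ≠ 0 by omega)
  set t : Fin n → Fin n :=
    Function.update (Function.update (fun _ => ⟨n - 1, by omega⟩) ⟨0, by omega⟩ p) p q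
  have ht0 : t ⟨0, by omega⟩ = p := by simp [t, Function.update_of_ne hp0.symm]
  have htp : t p = q := by simp [t]
  have hrest : ∀ x, x ≠ ⟨0, by omega⟩ → x ≠ p → t x = ⟨n - 1, by omega⟩ := by
    intro x hx0 hxp; simp [t, hx0, hxp]
  have hhigh : ∀ x : Fin n, n - 2 ≤ x.val → t x = ⟨n - 1, by omega⟩ := fun x hx =>
    hrest x (Fin.ne_of_val_ne (show x.val ≠ 0 by omega)) (Fin.ne_of_val_ne (by omega))
  have hzero : ∀ x, t x ≠ ⟨0, by omega⟩ := by
    intro x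
    by_cases hx0 : x = ⟨0, by omega⟩
    · rwa [hx0, ht0]
    by_cases hxp : x = p
    · rwa [hxp, htp]
    · rw [hrest x hx0 hxp]; exact Fin.ne_of_val_ne (show n - 1 ≠ 0 by omega)
  refine ⟨t, (mem_Wbf5_iff hn).2 ⟨hzero, hhigh _ (by simp; omega), hhigh _ le_rfl,
    InjOffSink.update_update hpq⟩, ht0, htp⟩

end Wbf5

theorem stmt10 (n : ℕ) (hn : 3 ≤ n) :
    (∀ s ∈ Wbf5 n hn, ∀ t ∈ Wbf5 n hn, (t ∘ s) ∈ Wbf5 n hn) ∧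
    (∀ u ∈ Wbf5 n hn, ∀ p ∈ QM n, ∀ q ∈ QM n, p ≠ q → ¬ Focuses n hn u p q) ∧
    (∀ p ∈ QM n, ∀ q ∈ QM n, p ≠ q → Colliding n hn (Wbf5 n hn) p q) := by
  refine ⟨fun s hs t ht => comp_mem_Wbf5 hn hs ht, ?_, fun p hp q hq hpq => ?_⟩
  · rintro u hu p - q - hpq ⟨-, h, hmem⟩
    rw [injOffSink_of_mem_Wbf5 hn hu p q hpq h] at hmem
    simp [QM, Fin.ext_iff] at hmem
    omega
  · have hq0 : q ≠ ⟨0, by omega⟩ := Fin.ne_of_val_ne (show q.val ≠ 0 by have := hq.1; omega)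
    obtain ⟨t, ht, ht0, htp⟩ := exists_mem_Wbf5_apply_zero_eq hn hp hq0 hpq
    exact ⟨hp, hq, hpq, t, ht, ht0, p, hp, htp⟩
end

section
/- Let n ≥ 3 and let T ⊆ B_bf(n) be a set of transformations of Q such that every pair of distinct states of Q_M is colliding in T and no element of T focuses any pair that is colliding in T. Then T ⊆ W≤5_bf(n). -/
theorem stmt11 (n : ℕ) (hn : 3 ≤ n) (T : Set (Fin n → Fin n))
    (hTB : T ⊆ Bbf n hn)
    (hcol : ∀ p ∈ QM n, ∀ q ∈ QM n, p ≠ q → Colliding n hn T p q)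
    (hfoc : ∀ u ∈ T, ∀ p q : Fin n, Colliding n hn T p q → ¬ Focuses n hn u p q) :
    T ⊆ Wbf5 n hn := by
  intro t ht
  refine ⟨hTB ht, ?_⟩
  intro p hp q hq hpq
  by_cases heq : t p = t q
  · left
    by_cases h1 : t p = ⟨n - 1, by omega⟩
    · exact ⟨h1, heq ▸ h1⟩
    · exfalso
      apply hfoc t ht p q (hcol p hp q hq hpq)
      refine ⟨hpq, heq, ?_⟩
      have h0 : t p ≠ ⟨0, by omega⟩ := (hTB ht).1 p
      have hv0 : (t p).val ≠ 0 := fun h => h0 (Fin.ext h)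
      have hv1 : (t p).val ≠ n - 1 := fun h => h1 (Fin.ext h)
      have hlt : (t p).val < n := (t p).isLt
      by_cases h2 : (t p).val = n - 2
      · exact Or.inr (Fin.ext h2)
      · exact Or.inl ⟨by omega, by omega⟩
  · exact Or.inr heq
end

section
/- Let n ≥ 3. For all t, t' ∈ W≤5_bf(n) there exists a state q ∈ Q_M ∪ {0} with q(tt') = n−1. Consequently, no transformation t ∈ W≤5_bf(n) whose restriction to Q_M ∪ {0} is a bijection onto Q_M ∪ {n−2} can be written as a composition t₁t₂ of two elements of W≤5_bf(n); moreover, W≤5_bf(n) contains exactly (n−2)! such transformations t. -/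
set_option maxHeartbeats 1000000

section Aux

variable {n : ℕ}

/-- `Q_M ∪ {0}`. -/
def AA (hn : 3 ≤ n) : Set (Fin n) := QM n ∪ {⟨0, by omega⟩}

/-- `Q_M ∪ {n-2}`. -/
def BB (hn : 3 ≤ n) : Set (Fin n) := QM n ∪ {⟨n - 2, by omega⟩}

lemma memAA (hn : 3 ≤ n) {q : Fin n} : q ∈ AA hn ↔ q.val ≤ n - 3 := by
  constructor
  · rintro (⟨h1, h2⟩ | h)
    · exact h2
    · simp only [Set.mem_singleton_iff] at h; subst h; simp
  · intro h
    by_cases h0 : q.val = 0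
    · right; simp only [Set.mem_singleton_iff]; exact Fin.ext h0
    · left; exact ⟨by omega, h⟩

lemma memBB (hn : 3 ≤ n) {q : Fin n} : q ∈ BB hn ↔ 1 ≤ q.val ∧ q.val ≤ n - 2 := by
  constructor
  · rintro (⟨h1, h2⟩ | h)
    · exact ⟨h1, by omega⟩
    · simp only [Set.mem_singleton_iff] at h; subst h; simp; omega
  · rintro ⟨h1, h2⟩
    by_cases h3 : q.val ≤ n - 3
    · left; exact ⟨h1, h3⟩
    · right; simp only [Set.mem_singleton_iff]; exact Fin.ext (by simp; omega)

lemma ncardAA (hn : 3 ≤ n) : (AA hn).ncard = n - 2 := by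
  have e : (AA hn) ≃ Fin (n - 2) :=
    { toFun := fun q => ⟨q.val.val, by have := (memAA hn).mp q.2; omega⟩
      invFun := fun i => ⟨⟨i.val, by have := i.isLt; omega⟩, (memAA hn).mpr (by have := i.isLt; simp; omega)⟩
      left_inv := fun q => Subtype.ext (Fin.ext rfl)
      right_inv := fun i => rfl }
  rw [← Nat.card_coe_set_eq, Nat.card_congr e, Nat.card_eq_fintype_card, Fintype.card_fin]

lemma ncardBB (hn : 3 ≤ n) : (BB hn).ncard = n - 2 := by
  have e : (BB hn) ≃ Fin (n - 2) :=
    { toFun := fun q => ⟨q.val.val - 1, by have := (memBB hn).mp q.2; omega⟩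
      invFun := fun i => ⟨⟨i.val + 1, by have := i.isLt; omega⟩, (memBB hn).mpr (by have := i.isLt; simp)⟩
      left_inv := fun q => Subtype.ext (Fin.ext (by have := (memBB hn).mp q.2; simp; omega))
      right_inv := fun i => Fin.ext (by simp) }
  rw [← Nat.card_coe_set_eq, Nat.card_congr e, Nat.card_eq_fintype_card, Fintype.card_fin]

lemma ncardQM (hn : 3 ≤ n) : (QM n).ncard = n - 3 := by
  have e : (QM n) ≃ Fin (n - 3) :=
    { toFun := fun q => ⟨q.val.val - 1, by
        have h : 1 ≤ q.val.val ∧ q.val.val ≤ n - 3 := q.2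
        omega⟩
      invFun := fun i => ⟨⟨i.val + 1, by have := i.isLt; omega⟩,
        show 1 ≤ i.val + 1 ∧ i.val + 1 ≤ n - 3 from ⟨by omega, by have := i.isLt; omega⟩⟩
      left_inv := fun q => Subtype.ext (Fin.ext (by
        have h : 1 ≤ q.val.val ∧ q.val.val ≤ n - 3 := q.2
        simp; omega))
      right_inv := fun i => Fin.ext (by simp) }
  rw [← Nat.card_coe_set_eq, Nat.card_congr e, Nat.card_eq_fintype_card, Fintype.card_fin]

/-- injectivity off `n-1` -/
lemma injAux (hn : 3 ≤ n) (t : Fin n → Fin n)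
    (h2 : t ⟨n - 2, by omega⟩ = ⟨n - 1, by omega⟩)
    (hinj : Set.InjOn t (AA hn)) (hmap : Set.MapsTo t (AA hn) (BB hn))
    {a b : Fin n} (ha : a ≠ ⟨n - 1, by omega⟩) (hb : b ≠ ⟨n - 1, by omega⟩)
    (hab : t a = t b) : a = b := by
  have ha' : a ∈ AA hn ∨ a = ⟨n - 2, by omega⟩ := by
    rcases Nat.lt_or_ge a.val (n - 2) with h | h
    · left; exact (memAA hn).mpr (by omega)
    · right
      refine Fin.ext ?_
      have := a.isLt
      have hne : a.val ≠ n - 1 := fun hc => ha (Fin.ext (by simp; omega))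
      simp; omega
  have hb' : b ∈ AA hn ∨ b = ⟨n - 2, by omega⟩ := by
    rcases Nat.lt_or_ge b.val (n - 2) with h | h
    · left; exact (memAA hn).mpr (by omega)
    · right
      refine Fin.ext ?_
      have := b.isLt
      have hne : b.val ≠ n - 1 := fun hc => hb (Fin.ext (by simp; omega))
      simp; omega
  rcases ha' with ha' | ha' <;> rcases hb' with hb' | hb'
  · exact hinj ha' hb' hab
  · exfalso
    have h1 := (memBB hn).mp (hmap ha')
    rw [hab, hb', h2] at h1
    simp at h1; omega
  · exfalso
    have h1 := (memBB hn).mp (hmap hb')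
    rw [← hab, ha', h2] at h1
    simp at h1; omega
  · rw [ha', hb']

lemma iterInj (hn : 3 ≤ n) (t : Fin n → Fin n)
    (h1 : t ⟨n - 1, by omega⟩ = ⟨n - 1, by omega⟩)
    (h2 : t ⟨n - 2, by omega⟩ = ⟨n - 1, by omega⟩)
    (hinj : Set.InjOn t (AA hn)) (hmap : Set.MapsTo t (AA hn) (BB hn)) :
    ∀ j : ℕ, t^[j] ⟨0, by omega⟩ ≠ ⟨n - 1, by omega⟩ →
      ∀ q : Fin n, q ≠ ⟨0, by omega⟩ → q ≠ ⟨n - 1, by omega⟩ →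
        t^[j] ⟨0, by omega⟩ ≠ t^[j] q := by
  intro j
  induction j with
  | zero =>
    intro _ q hq _ heq
    simp only [Function.iterate_zero, id_eq] at heq
    exact hq heq.symm
  | succ j ih =>
    intro hne q hq0 hq1 heq
    simp only [Function.iterate_succ_apply'] at hne heq
    have hz' : t^[j] ⟨0, by omega⟩ ≠ ⟨n - 1, by omega⟩ := by
      intro hc; rw [hc, h1] at hne; exact hne rfl
    have hq' : t^[j] q ≠ ⟨n - 1, by omega⟩ := by
      intro hc; rw [hc, h1] at heq; exact hne heq
    exact ih hz' q hq0 hq1 (injAux hn t h2 hinj hmap hz' hq' heq)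

lemma mem_Wbf5_of (hn : 3 ≤ n) (t : Fin n → Fin n)
    (h1 : t ⟨n - 1, by omega⟩ = ⟨n - 1, by omega⟩)
    (h2 : t ⟨n - 2, by omega⟩ = ⟨n - 1, by omega⟩)
    (hmap : Set.MapsTo t (AA hn) (BB hn))
    (hinj : Set.InjOn t (AA hn)) : t ∈ Wbf5 n hn := by
  refine ⟨⟨?_, h1, h2, ?_⟩, ?_⟩
  · intro q heq
    by_cases hq : q ∈ AA hn
    · have := (memBB hn).mp (hmap hq)
      rw [heq] at this
      simp at this
    · have hv : q.val = n - 2 ∨ q.val = n - 1 := by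
        have := q.isLt
        have hna : ¬ q.val ≤ n - 3 := fun h => hq ((memAA hn).mpr h)
        omega
      rcases hv with hv | hv
      · have : q = (⟨n - 2, by omega⟩ : Fin n) := Fin.ext hv
        rw [this, h2] at heq
        have := congrArg Fin.val heq
        simp at this; omega
      · have : q = (⟨n - 1, by omega⟩ : Fin n) := Fin.ext hv
        rw [this, h1] at heq
        have := congrArg Fin.val heq
        simp at this; omega
  · intro j hj
    by_cases hz : t^[j] ⟨0, by omega⟩ = ⟨n - 1, by omega⟩
    · left; exact hz
    · right
      intro q hq0 hq1
      exact iterInj hn t h1 h2 hinj hmap j hz q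
        (fun hc => by rw [hc] at hq0; simp at hq0)
        (fun hc => by rw [hc] at hq1; simp at hq1)
  · intro p hp q hq hpq
    right
    intro heq
    exact hpq (hinj (Set.subset_union_left hp) (Set.subset_union_left hq) heq)

lemma exists_high (hn : 3 ≤ n) (t : Fin n → Fin n) (ht : t ∈ Wbf5 n hn) :
    ∃ q, q ∈ AA hn ∧ (t q = ⟨n - 2, by omega⟩ ∨ t q = ⟨n - 1, by omega⟩) := by
  by_contra hcon
  push_neg at hcon
  have hQM : ∀ q ∈ AA hn, t q ∈ QM n := by
    intro q hq
    obtain ⟨hne2, hne1⟩ := hcon q hq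
    have h0 : t q ≠ ⟨0, by omega⟩ := ht.1.1 q
    have hlt := (t q).isLt
    refine ⟨?_, ?_⟩
    · have : (t q).val ≠ 0 := fun hc => h0 (Fin.ext hc)
      omega
    · have a2 : (t q).val ≠ n - 2 := fun hc => hne2 (Fin.ext hc)
      have a1 : (t q).val ≠ n - 1 := fun hc => hne1 (Fin.ext hc)
      omega
  have hinj : Set.InjOn t (AA hn) := by
    intro p hp q hq heq
    by_contra hpq
    rcases hp with hp | hp <;> rcases hq with hq | hq
    · rcases ht.2 p hp q hq hpq with ⟨e1, _⟩ | hne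
      · have := (hQM p (Or.inl hp)).2
        rw [e1] at this
        simp at this; omega
      · exact hne heq
    · simp only [Set.mem_singleton_iff] at hq
      subst hq
      rcases ht.1.2.2.2 1 le_rfl with hc | hall
      · simp only [Function.iterate_one] at hc
        have := (hQM _ (Or.inr rfl)).2
        rw [hc] at this
        simp at this; omega
      · exact hall p hp.1 (by have := hp.2; omega) (by simpa using heq.symm)
    · simp only [Set.mem_singleton_iff] at hp
      subst hp
      rcases ht.1.2.2.2 1 le_rfl with hc | hall
      · simp only [Function.iterate_one] at hc
        have := (hQM _ (Or.inr rfl)).2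
        rw [hc] at this
        simp at this; omega
      · exact hall q hq.1 (by have := hq.2; omega) (by simpa using heq)
    · simp only [Set.mem_singleton_iff] at hp hq
      exact hpq (hp.trans hq.symm)
  have hsub : t '' (AA hn) ⊆ QM n := by
    rintro _ ⟨q, hq, rfl⟩
    exact hQM q hq
  have hle : (AA hn).ncard ≤ (QM n).ncard := by
    calc (AA hn).ncard = (t '' (AA hn)).ncard := (Set.ncard_image_of_injOn hinj).symm
    _ ≤ (QM n).ncard := Set.ncard_le_ncard hsub (Set.toFinite _)
  rw [ncardAA hn, ncardQM hn] at hle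
  omega

lemma part1 (hn : 3 ≤ n) (t : Fin n → Fin n) (ht : t ∈ Wbf5 n hn)
    (t' : Fin n → Fin n) (ht' : t' ∈ Wbf5 n hn) :
    ∃ q : Fin n, q ∈ AA hn ∧ t' (t q) = ⟨n - 1, by omega⟩ := by
  obtain ⟨q, hq, hval⟩ := exists_high hn t ht
  refine ⟨q, hq, ?_⟩
  rcases hval with h | h
  · rw [h]; exact ht'.1.2.2.1
  · rw [h]; exact ht'.1.2.1

/-- the equivalence induced by a bijection on `AA`/`BB` -/
noncomputable def toEquiv (hn : 3 ≤ n) (t : Fin n → Fin n)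
    (h : Set.BijOn t (AA hn) (BB hn)) : (AA hn) ≃ (BB hn) :=
  Equiv.ofBijective (fun a => ⟨t a, h.mapsTo a.2⟩) (by
    constructor
    · intro a b hab
      have : t a.val = t b.val := congrArg Subtype.val hab
      exact Subtype.ext (h.injOn a.2 b.2 this)
    · intro b
      obtain ⟨a, ha, hta⟩ := h.surjOn b.2
      exact ⟨⟨a, ha⟩, Subtype.ext hta⟩)

@[simp] lemma toEquiv_apply (hn : 3 ≤ n) (t : Fin n → Fin n)
    (h : Set.BijOn t (AA hn) (BB hn)) (a : (AA hn)) :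
    (toEquiv hn t h a : Fin n) = t a := rfl

end Aux

theorem stmt12 (n : ℕ) (hn : 3 ≤ n) :
    (∀ t ∈ Wbf5 n hn, ∀ t' ∈ Wbf5 n hn,
      ∃ q : Fin n, (q ∈ QM n ∨ q = ⟨0, by omega⟩) ∧ t' (t q) = ⟨n - 1, by omega⟩) ∧
    (∀ t ∈ Wbf5 n hn,
      Set.BijOn t (QM n ∪ {⟨0, by omega⟩}) (QM n ∪ {⟨n - 2, by omega⟩}) →
        ¬ ∃ t₁ ∈ Wbf5 n hn, ∃ t₂ ∈ Wbf5 n hn, t = t₂ ∘ t₁) ∧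
    {t : Fin n → Fin n | t ∈ Wbf5 n hn ∧
      Set.BijOn t (QM n ∪ {⟨0, by omega⟩}) (QM n ∪ {⟨n - 2, by omega⟩})}.ncard =
      Nat.factorial (n - 2) := by
  have hA0 : (QM n ∪ {(⟨0, by omega⟩ : Fin n)}) = AA hn := rfl
  have hB0 : (QM n ∪ {(⟨n - 2, by omega⟩ : Fin n)}) = BB hn := rfl
  have p1 : ∀ t ∈ Wbf5 n hn, ∀ t' ∈ Wbf5 n hn,
      ∃ q : Fin n, (q ∈ QM n ∨ q = ⟨0, by omega⟩) ∧ t' (t q) = ⟨n - 1, by omega⟩ := by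
    intro t ht t' ht'
    obtain ⟨q, hq, hval⟩ := part1 hn t ht t' ht'
    refine ⟨q, ?_, hval⟩
    rcases hq with h | h
    · exact Or.inl h
    · exact Or.inr h
  refine ⟨p1, ?_, ?_⟩
  · rintro t ht hbij ⟨t₁, ht₁, t₂, ht₂, heq⟩
    obtain ⟨q, hq, hval⟩ := p1 t₁ ht₁ t₂ ht₂
    have hqA : q ∈ AA hn := by
      rcases hq with h | h
      · exact Or.inl h
      · exact Or.inr h
    have htq : t q = ⟨n - 1, by omega⟩ := by rw [heq]; exact hval
    have hmem := hbij.mapsTo hqA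
    rw [htq] at hmem
    have := (memBB hn).mp hmem
    simp at this; omega
  · rw [hA0, hB0]
    set S : Set (Fin n → Fin n) :=
      {t : Fin n → Fin n | t ∈ Wbf5 n hn ∧ Set.BijOn t (AA hn) (BB hn)} with hSdef
    have hFbij : Function.Bijective
        (fun (t : S) => toEquiv hn t.1 t.2.2) := by
      constructor
      · intro t u htu
        refine Subtype.ext (funext fun q => ?_)
        by_cases hq : q ∈ AA hn
        · have h := congrArg (fun e => ((e ⟨q, hq⟩ : (BB hn)) : Fin n)) htu
          exact h
        · have hv : q.val = n - 2 ∨ q.val = n - 1 := by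
            have := q.isLt
            have hna : ¬ q.val ≤ n - 3 := fun h => hq ((memAA hn).mpr h)
            omega
          rcases hv with hv | hv
          · have hq' : q = (⟨n - 2, by omega⟩ : Fin n) := Fin.ext hv
            rw [hq']; exact t.2.1.1.2.2.1.trans u.2.1.1.2.2.1.symm
          · have hq' : q = (⟨n - 1, by omega⟩ : Fin n) := Fin.ext hv
            rw [hq']; exact t.2.1.1.2.1.trans u.2.1.1.2.1.symm
      · intro e
        classical
        set t : Fin n → Fin n :=
          fun q => if h : q ∈ AA hn then (e ⟨q, h⟩ : Fin n) else ⟨n - 1, by omega⟩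
          with htdef
        have hnA1 : (⟨n - 1, by omega⟩ : Fin n) ∉ AA hn := by
          intro hc; have := (memAA hn).mp hc; simp at this; omega
        have hnA2 : (⟨n - 2, by omega⟩ : Fin n) ∉ AA hn := by
          intro hc; have := (memAA hn).mp hc; simp at this; omega
        have ht1 : t ⟨n - 1, by omega⟩ = ⟨n - 1, by omega⟩ := dif_neg hnA1
        have ht2 : t ⟨n - 2, by omega⟩ = ⟨n - 1, by omega⟩ := dif_neg hnA2
        have htval : ∀ (q : Fin n) (h : q ∈ AA hn), t q = (e ⟨q, h⟩ : Fin n) :=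
          fun q h => dif_pos h
        have hmap : Set.MapsTo t (AA hn) (BB hn) := by
          intro q hq
          rw [htval q hq]
          exact (e ⟨q, hq⟩).2
        have hinj : Set.InjOn t (AA hn) := by
          intro p hp q hq hpq
          rw [htval p hp, htval q hq] at hpq
          have := e.injective (Subtype.ext hpq)
          exact congrArg Subtype.val this
        have hsurj : Set.SurjOn t (AA hn) (BB hn) := by
          intro b hb
          refine ⟨(e.symm ⟨b, hb⟩).1, (e.symm ⟨b, hb⟩).2, ?_⟩
          rw [htval _ (e.symm ⟨b, hb⟩).2]
          have h1 : (⟨(e.symm ⟨b, hb⟩).1, (e.symm ⟨b, hb⟩).2⟩ : (AA hn)) = e.symm ⟨b, hb⟩ :=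
            Subtype.ext rfl
          rw [h1, e.apply_symm_apply]
        have hbij : Set.BijOn t (AA hn) (BB hn) := ⟨hmap, hinj, hsurj⟩
        have hmem : t ∈ S := ⟨mem_Wbf5_of hn t ht1 ht2 hmap hinj, hbij⟩
        refine ⟨⟨t, hmem⟩, ?_⟩
        refine Equiv.ext fun x => Subtype.ext ?_
        show t x.1 = (e x : Fin n)
        rw [htval x.1 x.2]
    have eA : (AA hn) ≃ Fin (n - 2) :=
      { toFun := fun q => ⟨q.val.val, by have := (memAA hn).mp q.2; omega⟩
        invFun := fun i => ⟨⟨i.val, by have := i.isLt; omega⟩, (memAA hn).mpr (by have := i.isLt; simp; omega)⟩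
        left_inv := fun q => Subtype.ext (Fin.ext rfl)
        right_inv := fun i => rfl }
    have eB : (BB hn) ≃ Fin (n - 2) :=
      { toFun := fun q => ⟨q.val.val - 1, by have := (memBB hn).mp q.2; omega⟩
        invFun := fun i => ⟨⟨i.val + 1, by have := i.isLt; omega⟩, (memBB hn).mpr (by have := i.isLt; simp)⟩
        left_inv := fun q => Subtype.ext (Fin.ext (by have := (memBB hn).mp q.2; simp; omega))
        right_inv := fun i => Fin.ext (by simp) }
    calc S.ncard = Nat.card S := (Nat.card_coe_set_eq S).symm
      _ = Nat.card ((AA hn) ≃ (BB hn)) := Nat.card_eq_of_bijective _ hFbij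
      _ = Nat.card (Fin (n - 2) ≃ Fin (n - 2)) := Nat.card_congr (eA.equivCongr eB)
      _ = Nat.factorial (n - 2) := by
          rw [Nat.card_eq_fintype_card, Fintype.card_equiv (Equiv.refl _), Fintype.card_fin]
end

section
/- Let n ≥ 3. If G is a set of transformations of Q that generates W≤5_bf(n) as a semigroup, then G has at least (n−2)! elements. -/
namespace Stmt13Aux

/-- The permutation-like transformation: maps `{0,…,n−3}` bijectively onto
`{1,…,n−2}` via `σ`, and sends `n−2, n−1` to `n−1`. -/
def F (n : ℕ) (hn : 3 ≤ n) (σ : Equiv.Perm (Fin (n - 2))) : Fin n → Fin n :=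
  fun q => if h : q.val < n - 2 then
    ⟨(σ ⟨q.val, h⟩).val + 1, by have := (σ ⟨q.val, h⟩).isLt; omega⟩
  else ⟨n - 1, by omega⟩

lemma F_lt (n : ℕ) (hn : 3 ≤ n) (σ : Equiv.Perm (Fin (n - 2))) (q : Fin n)
    (h : q.val < n - 2) : (F n hn σ q).val = (σ ⟨q.val, h⟩).val + 1 := by
  simp [F, dif_pos h]

lemma F_ge (n : ℕ) (hn : 3 ≤ n) (σ : Equiv.Perm (Fin (n - 2))) (q : Fin n)
    (h : ¬ q.val < n - 2) : F n hn σ q = ⟨n - 1, by omega⟩ := by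
  simp [F, dif_neg h]

lemma F_bounds (n : ℕ) (hn : 3 ≤ n) (σ : Equiv.Perm (Fin (n - 2))) (q : Fin n)
    (h : q.val < n - 2) : 1 ≤ (F n hn σ q).val ∧ (F n hn σ q).val ≤ n - 2 := by
  rw [F_lt n hn σ q h]
  have := (σ ⟨q.val, h⟩).isLt
  omega

lemma F_inj (n : ℕ) (hn : 3 ≤ n) (σ : Equiv.Perm (Fin (n - 2))) (a b : Fin n)
    (ha : a.val < n - 2) (hb : b.val < n - 2) (h : F n hn σ a = F n hn σ b) : a = b := by
  have h1 := F_lt n hn σ a ha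
  have h2 := F_lt n hn σ b hb
  have hv : (σ ⟨a.val, ha⟩).val = (σ ⟨b.val, hb⟩).val := by
    have := congrArg Fin.val h
    omega
  have h3 : (⟨a.val, ha⟩ : Fin (n - 2)) = ⟨b.val, hb⟩ := σ.injective (Fin.ext hv)
  have h4 := congrArg Fin.val h3
  exact Fin.ext h4

lemma F_fix (n : ℕ) (hn : 3 ≤ n) (σ : Equiv.Perm (Fin (n - 2))) :
    F n hn σ ⟨n - 1, by omega⟩ = ⟨n - 1, by omega⟩ :=
  F_ge n hn σ _ (by simp; omega)

lemma key (n : ℕ) (hn : 3 ≤ n) (σ : Equiv.Perm (Fin (n - 2))) :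
    ∀ j (a b : Fin n), (F n hn σ)^[j] a = (F n hn σ)^[j] b →
      ((F n hn σ)^[j] a).val ≠ n - 1 → a = b := by
  intro j
  induction j with
  | zero => intro a b h _; exact h
  | succ j ih =>
    intro a b h hne
    simp only [Function.iterate_succ_apply] at h hne
    have hfa : (F n hn σ a).val ≠ n - 1 := by
      intro hv
      have : F n hn σ a = ⟨n - 1, by omega⟩ := Fin.ext hv
      rw [this, Function.iterate_fixed (F_fix n hn σ)] at hne
      exact hne rfl
    have hab : F n hn σ a = F n hn σ b := ih _ _ h hne
    have ha : a.val < n - 2 := by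
      by_contra hc
      exact hfa (congrArg Fin.val (F_ge n hn σ a hc))
    have hb : b.val < n - 2 := by
      by_contra hc
      rw [hab] at hfa
      exact hfa (congrArg Fin.val (F_ge n hn σ b hc))
    exact F_inj n hn σ a b ha hb hab

lemma F_mem_Wbf5 (n : ℕ) (hn : 3 ≤ n) (σ : Equiv.Perm (Fin (n - 2))) :
    F n hn σ ∈ Wbf5 n hn := by
  constructor
  · refine ⟨?_, ?_, ?_, ?_⟩
    · intro q h
      by_cases hq : q.val < n - 2
      · have := F_bounds n hn σ q hq
        have := congrArg Fin.val h
        simp at this; omega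
      · have := congrArg Fin.val (F_ge n hn σ q hq)
        have := congrArg Fin.val h
        simp at *; omega
    · exact F_fix n hn σ
    · exact F_ge n hn σ _ (by simp)
    · intro j _
      by_cases h : (F n hn σ)^[j] ⟨0, by omega⟩ = ⟨n - 1, by omega⟩
      · exact Or.inl h
      · refine Or.inr fun q hq1 _ heq => ?_
        have hne : ((F n hn σ)^[j] ⟨0, by omega⟩).val ≠ n - 1 := fun hv => h (Fin.ext hv)
        have := key n hn σ j _ _ heq hne
        have := congrArg Fin.val this
        simp at this; omega
  · intro p hp q hq hpq
    refine Or.inr fun h => hpq ?_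
    obtain ⟨hp1, hp2⟩ := hp
    obtain ⟨hq1, hq2⟩ := hq
    exact F_inj n hn σ p q (by omega) (by omega) h

lemma F_irred (n : ℕ) (hn : 3 ≤ n) (σ : Equiv.Perm (Fin (n - 2)))
    (u v : Fin n → Fin n) (hu : u ∈ Bbf n hn) (hv : v ∈ Bbf n hn) :
    F n hn σ ≠ u ∘ v := by
  intro heq
  obtain ⟨hv0, _, _, _⟩ := hv
  obtain ⟨_, hufix, hu2, _⟩ := hu
  -- values of v on {0,…,n−3} lie in {1,…,n−2}
  have hvb : ∀ q : Fin n, q.val < n - 2 → 1 ≤ (v q).val ∧ (v q).val ≤ n - 2 := by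
    intro q hq
    have h1 : (v q).val ≠ 0 := by
      intro h0
      exact hv0 q (Fin.ext h0)
    have h2 : (v q).val ≠ n - 1 := by
      intro h1
      have : v q = ⟨n - 1, by omega⟩ := Fin.ext h1
      have hb := F_bounds n hn σ q hq
      have : F n hn σ q = ⟨n - 1, by omega⟩ := by
        rw [heq]; simp [Function.comp, this, hufix]
      have := congrArg Fin.val this
      omega
    have := (v q).isLt
    omega
  -- injectivity of v on {0,…,n−3}
  have hvinj : ∀ a b : Fin n, a.val < n - 2 → b.val < n - 2 → v a = v b → a = b := by
    intro a b ha hb h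
    refine F_inj n hn σ a b ha hb ?_
    rw [heq]; simp [Function.comp, h]
  -- the induced self-map of Fin (n − 2)
  set g : Fin (n - 2) → Fin (n - 2) := fun i =>
    ⟨(v ⟨i.val, by omega⟩).val - 1, by
      have := hvb ⟨i.val, by omega⟩ (by simpa using i.isLt)
      omega⟩ with hg
  have hginj : Function.Injective g := by
    intro i i' h
    have hi := hvb ⟨i.val, by omega⟩ (by simpa using i.isLt)
    have hi' := hvb ⟨i'.val, by omega⟩ (by simpa using i'.isLt)
    have hvv : (v ⟨i.val, by omega⟩).val = (v ⟨i'.val, by omega⟩).val := by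
      have := congrArg Fin.val h
      simp [hg] at this
      omega
    have h5 := hvinj _ _ (by simpa using i.isLt) (by simpa using i'.isLt) (Fin.ext hvv)
    have h6 := congrArg Fin.val h5
    exact Fin.ext h6
  have hgsurj : Function.Surjective g := Finite.injective_iff_surjective.mp hginj
  obtain ⟨i, hi⟩ := hgsurj ⟨n - 3, by omega⟩
  have hu2v : ∀ w : Fin n, w.val = n - 2 → (u w).val = n - 1 := by
    intro w hw
    have hw' : w = ⟨n - 2, by omega⟩ := Fin.ext hw
    rw [hw']
    exact congrArg Fin.val hu2
  have hilt : (i : ℕ) < n := by omega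
  have hib := hvb ⟨i.val, hilt⟩ (by simpa using i.isLt)
  have hival : (v ⟨i.val, hilt⟩).val = n - 2 := by
    have h7 := congrArg Fin.val hi
    simp [hg] at h7
    omega
  have hF := congrArg Fin.val (congrFun heq ⟨i.val, hilt⟩)
  have h8 := hu2v _ hival
  have hb := F_bounds n hn σ ⟨i.val, hilt⟩ (by simpa using i.isLt)
  rw [Function.comp_apply] at hF
  omega

end Stmt13Aux

theorem stmt13 (n : ℕ) (hn : 3 ≤ n) (G : Set (Fin n → Fin n))
    (hG : Generates n G (Wbf5 n hn)) :
    Nat.factorial (n - 2) ≤ G.ncard := by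

  open Stmt13Aux in
  classical
  -- every generator is in Wbf5
  have hGW : G ⊆ Wbf5 n hn := by
    intro g hg
    rw [hG]
    exact ⟨[g], by simp, by simp [hg], rfl⟩
  -- every F σ is in G
  have hFG : ∀ σ : Equiv.Perm (Fin (n - 2)), F n hn σ ∈ G := by
    intro σ
    have hW : F n hn σ ∈ Wbf5 n hn := F_mem_Wbf5 n hn σ
    rw [hG] at hW
    obtain ⟨l, hne, hl, hfold⟩ := hW
    rcases List.eq_nil_or_concat l with rfl | ⟨l', u, rfl⟩
    · exact absurd rfl hne
    rcases eq_or_ne l' [] with rfl | hl'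
    · have hu : u ∈ G := hl u (by simp)
      have : F n hn σ = u := by
        simpa using hfold
      rwa [this]
    · exfalso
      have hv : (l'.foldl (fun a g => g ∘ a) id) ∈ Wbf5 n hn := by
        rw [hG]
        exact ⟨l', hl', fun g h => hl g (by simp [h]), rfl⟩
      have hu : u ∈ Wbf5 n hn := hGW (hl u (by simp))
      have hfold' : F n hn σ = u ∘ (l'.foldl (fun a g => g ∘ a) id) := by
        simpa [List.foldl_concat] using hfold
      exact F_irred n hn σ u _ hu.1 hv.1 hfold'
  -- F is injective
  have hFinj : Function.Injective (F n hn) := by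
    intro σ τ h
    ext i
    have hlt : (i : ℕ) < n := by have := i.isLt; omega
    have := congrFun h ⟨i.val, hlt⟩
    have h1 := F_lt n hn σ ⟨i.val, hlt⟩ (by simpa using i.isLt)
    have h2 := F_lt n hn τ ⟨i.val, hlt⟩ (by simpa using i.isLt)
    have hi : (⟨(⟨i.val, hlt⟩ : Fin n).val, by simpa using i.isLt⟩ : Fin (n - 2)) = i :=
      Fin.ext rfl
    rw [hi] at h1 h2
    have := congrArg Fin.val this
    omega
  -- counting
  have hsub : Set.range (F n hn) ⊆ G := Set.range_subset_iff.mpr hFG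
  have hfin : G.Finite := Set.toFinite G
  have hle := Set.ncard_le_ncard hsub hfin
  have hcard : (Set.range (F n hn)).ncard = Nat.factorial (n - 2) := by
    rw [← Nat.card_coe_set_eq, Nat.card_range_of_injective hFinj,
      Nat.card_eq_fintype_card, Fintype.card_perm, Fintype.card_fin]
  omega
end

section
/- Let n ≥ 3, let T be a set of transformations of Q that is closed under composition, satisfies T ⊆ B_bf(n), and such that no element of T focuses any pair that is colliding in T. Let t, t̂ ∈ T and s ∈ W≥6_bf(n). Suppose: (1) there is a set C, which is either the orbit of some state under s or the tree of some state in s, such that every state q ∈ Q_M with qt ≠ qs belongs to C; (2) there is a set Ĉ, which is either the orbit of some state under s or the tree of some state in s, such that every state q ∈ Q_M with q t̂ ≠ qs belongs to Ĉ; (3) there exist i, j ≥ 0 and a pair {p₁, p₂} of distinct states colliding in T with p₁, p₂ ∈ C such that the transformation s^i t^j focuses {p₁, p₂}. Then C ⊆ Ĉ or Ĉ ⊆ C. In particular, if C and Ĉ are both orbits, or are both trees of states mapped by s to n−1, then C = Ĉ. -/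
/-- The orbit of a state `q` under a transformation `s`:
`{p : ∃ i, j ≥ 0, p s^i = q s^j}`. -/
def orbitOf (n : ℕ) (s : Fin n → Fin n) (q : Fin n) : Set (Fin n) :=
  {p : Fin n | ∃ i j : ℕ, s^[i] p = s^[j] q}

/-- A state `q` lies on a cycle of `s` if `q s^i = q` for some `i ≥ 1`. -/
def OnCycle (n : ℕ) (s : Fin n → Fin n) (q : Fin n) : Prop :=
  ∃ i : ℕ, 1 ≤ i ∧ s^[i] q = q

/-- The tree of a state `q` in `s` (for `q` not on a cycle):
`{p : ∃ i ≥ 0, p s^i = q}`. -/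
def treeOf (n : ℕ) (s : Fin n → Fin n) (q : Fin n) : Set (Fin n) :=
  {p : Fin n | ∃ i : ℕ, s^[i] p = q}

section AuxStmt14

variable {n : ℕ}

lemma iterMemT {T : Set (Fin n → Fin n)}
    (hclosed : ∀ t ∈ T, ∀ u ∈ T, (u ∘ t) ∈ T)
    {t : Fin n → Fin n} (ht : t ∈ T) : ∀ m, 1 ≤ m → t^[m] ∈ T := by
  intro m hm
  induction m with
  | zero => omega
  | succ k ih =>
    rcases Nat.eq_zero_or_pos k with hk | hk
    · subst hk; simpa using ht
    · rw [Function.iterate_succ']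
      exact hclosed _ (ih hk) _ ht

lemma iterComm (s : Fin n → Fin n) (a j : ℕ) (q : Fin n) :
    s^[a] (s^[j] q) = s^[j] (s^[a] q) := by
  rw [← Function.iterate_add_apply, ← Function.iterate_add_apply, Nat.add_comm]

lemma orbitSubset {s : Fin n → Fin n} {a b : ℕ} {q q' : Fin n}
    (h : s^[a] q = s^[b] q') : orbitOf n s q ⊆ orbitOf n s q' := by
  rintro p ⟨i, j, hij⟩
  refine ⟨a + i, j + b, ?_⟩
  rw [Function.iterate_add_apply, hij, iterComm, h]
  rw [← Function.iterate_add_apply]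

lemma memOrbitSelf (s : Fin n → Fin n) (q : Fin n) : q ∈ orbitOf n s q := ⟨0, 0, rfl⟩

lemma memTreeSelf (s : Fin n → Fin n) (q : Fin n) : q ∈ treeOf n s q := ⟨0, rfl⟩

lemma treeSubset {s : Fin n → Fin n} {a : ℕ} {q q' : Fin n}
    (h : s^[a] q = q') : treeOf n s q ⊆ treeOf n s q' := by
  rintro p ⟨i, hi⟩
  exact ⟨a + i, by rw [Function.iterate_add_apply, hi, h]⟩

lemma treeSubsetOrbit (s : Fin n → Fin n) (q : Fin n) :
    treeOf n s q ⊆ orbitOf n s q := by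
  rintro p ⟨i, hi⟩
  exact ⟨i, 0, hi⟩

lemma orbitIterMem {s : Fin n → Fin n} {q p : Fin n}
    (hp : p ∈ orbitOf n s q) (k : ℕ) : s^[k] p ∈ orbitOf n s q := by
  obtain ⟨i, j, hij⟩ := hp
  refine ⟨i, k + j, ?_⟩
  rw [iterComm, hij, ← Function.iterate_add_apply]

lemma orbitOfIterMem {s : Fin n → Fin n} {q r : Fin n} {m : ℕ}
    (h : s^[m] r ∈ orbitOf n s q) : r ∈ orbitOf n s q := by
  obtain ⟨c, d, hcd⟩ := h
  exact ⟨c + m, d, by rw [Function.iterate_add_apply]; exact hcd⟩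

lemma orbitEqOfMem {s : Fin n → Fin n} {q q' x : Fin n}
    (hx : x ∈ orbitOf n s q) (hx' : x ∈ orbitOf n s q') :
    orbitOf n s q = orbitOf n s q' := by
  obtain ⟨a, b, hab⟩ := hx
  obtain ⟨c, d, hcd⟩ := hx'
  have key : s^[c + b] q = s^[a + d] q' := by
    rw [Function.iterate_add_apply, Function.iterate_add_apply, ← hab, ← hcd, iterComm]
  exact Set.Subset.antisymm (orbitSubset key) (orbitSubset key.symm)

end AuxStmt14

theorem stmt14 (n : ℕ) (hn : 3 ≤ n) (T : Set (Fin n → Fin n))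
    (hclosed : ∀ t ∈ T, ∀ u ∈ T, (u ∘ t) ∈ T)
    (hTB : T ⊆ Bbf n hn)
    (hfoc : ∀ u ∈ T, ∀ p q : Fin n, Colliding n hn T p q → ¬ Focuses n hn u p q)
    (t te : Fin n → Fin n) (ht : t ∈ T) (hte : te ∈ T)
    (s : Fin n → Fin n) (hs : s ∈ Wbf6 n hn)
    (C Ce : Set (Fin n))
    (hC : (∃ q : Fin n, C = orbitOf n s q) ∨
      (∃ q : Fin n, ¬ OnCycle n s q ∧ C = treeOf n s q))
    (hCmem : ∀ q ∈ QM n, t q ≠ s q → q ∈ C)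
    (hCe : (∃ q : Fin n, Ce = orbitOf n s q) ∨
      (∃ q : Fin n, ¬ OnCycle n s q ∧ Ce = treeOf n s q))
    (hCeMem : ∀ q ∈ QM n, te q ≠ s q → q ∈ Ce)
    (hfocused : ∃ i j : ℕ, ∃ p₁ p₂ : Fin n,
      Colliding n hn T p₁ p₂ ∧ p₁ ∈ C ∧ p₂ ∈ C ∧
      Focuses n hn (fun q => t^[j] (s^[i] q)) p₁ p₂) :
    (C ⊆ Ce ∨ Ce ⊆ C) ∧
    (((∃ q qe : Fin n, C = orbitOf n s q ∧ Ce = orbitOf n s qe) ∨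
      (∃ q qe : Fin n, ¬ OnCycle n s q ∧ ¬ OnCycle n s qe ∧
        s q = ⟨n - 1, by omega⟩ ∧ s qe = ⟨n - 1, by omega⟩ ∧
        C = treeOf n s q ∧ Ce = treeOf n s qe)) → C = Ce) := by
  obtain ⟨hsB, -⟩ := hs
  obtain ⟨hs0, hsn1, hsn2, -⟩ := hsB
  obtain ⟨hte0, hten1, hten2, -⟩ := hTB hte
  have key : C ⊆ Ce ∨ Ce ⊆ C := by
    by_cases hint : ∃ x, x ∈ C ∧ x ∈ Ce
    · -- comparability from a common point
      obtain ⟨x, hxC, hxCe⟩ := hint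
      rcases hC with ⟨q, rfl⟩ | ⟨q, hq, rfl⟩ <;> rcases hCe with ⟨qe, rfl⟩ | ⟨qe, hqe, rfl⟩
      · exact Or.inl (orbitEqOfMem hxC hxCe).subset
      · exact Or.inr ((treeSubsetOrbit s qe).trans
          (orbitEqOfMem (treeSubsetOrbit s qe hxCe) hxC).subset)
      · exact Or.inl ((treeSubsetOrbit s q).trans
          (orbitEqOfMem (treeSubsetOrbit s q hxC) hxCe).subset)
      · obtain ⟨a, ha⟩ := hxC
        obtain ⟨b, hb⟩ := hxCe
        rcases le_total a b with h | h
        · refine Or.inl (treeSubset (a := b - a) ?_)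
          rw [← ha, ← Function.iterate_add_apply, Nat.sub_add_cancel h, hb]
        · refine Or.inr (treeSubset (a := a - b) ?_)
          rw [← hb, ← Function.iterate_add_apply, Nat.sub_add_cancel h, ha]
    · -- disjoint case leads to a contradiction
      exfalso
      push_neg at hint
      obtain ⟨i, j, p₁, p₂, hcoll, hp₁C, hp₂C, hF⟩ := hfocused
      have hne : p₁ ≠ p₂ := hF.1
      have hEq : t^[j] (s^[i] p₁) = t^[j] (s^[i] p₂) := hF.2.1
      have hMem : t^[j] (s^[i] p₁) ∈ QM n ∨ t^[j] (s^[i] p₁) = ⟨n - 2, by omega⟩ := hF.2.2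
      have hp₁M : p₁ ∈ QM n := hcoll.1
      have hp₂M : p₂ ∈ QM n := hcoll.2.1
      -- iterates of points of C never meet Ce
      have notCe : ∀ p ∈ C, ∀ k, s^[k] p ∉ Ce := by
        rcases hC with ⟨q, rfl⟩ | ⟨q, hq, rfl⟩
        · intro p hp k
          exact hint _ (orbitIterMem hp k)
        · intro p hp k
          obtain ⟨a, ha⟩ := hp
          rcases le_or_gt k a with hk | hk
          · refine hint _ ⟨a - k, ?_⟩
            rw [← Function.iterate_add_apply, Nat.sub_add_cancel hk, ha]
          · have hm : s^[k] p = s^[k - a] q := by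
              rw [← ha, ← Function.iterate_add_apply, Nat.sub_add_cancel hk.le]
            intro hmem
            rcases hCe with ⟨qe, rfl⟩ | ⟨qe, hqe, rfl⟩
            · rw [hm] at hmem
              exact hint q (memTreeSelf s q) (orbitOfIterMem hmem)
            · obtain ⟨b, hb⟩ := hmem
              refine hint q (memTreeSelf s q) ⟨b + (k - a), ?_⟩
              rw [Function.iterate_add_apply, ← hm]
              exact hb
      -- iterates of points of QM under s never hit 0
      have nz : ∀ p ∈ QM n, ∀ k, s^[k] p ≠ (⟨0, by omega⟩ : Fin n) := by
        intro p hp k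
        cases k with
        | zero =>
          intro h
          rw [Function.iterate_zero_apply] at h
          have := hp.1
          rw [h] at this
          simp at this
        | succ k =>
          rw [Function.iterate_succ_apply']
          exact hs0 _
      -- te agrees with s outside Ce (away from 0)
      have step : ∀ x : Fin n, x ∉ Ce → x ≠ (⟨0, by omega⟩ : Fin n) → te x = s x := by
        intro x hxCe hx0
        have hlt := x.isLt
        rcases (show x.val = 0 ∨ (1 ≤ x.val ∧ x.val ≤ n - 3) ∨ x.val = n - 2 ∨
            x.val = n - 1 from by omega) with h | h | h | h
        · exact absurd (Fin.ext h) hx0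
        · by_contra hne'
          exact hxCe (hCeMem x h hne')
        · have hx : x = (⟨n - 2, by omega⟩ : Fin n) := Fin.ext h
          rw [hx, hten2, hsn2]
        · have hx : x = (⟨n - 1, by omega⟩ : Fin n) := Fin.ext h
          rw [hx, hten1, hsn1]
      have agree : ∀ p, p ∈ C → p ∈ QM n → ∀ k, te^[k] p = s^[k] p := by
        intro p hpC hpM k
        induction k with
        | zero => rfl
        | succ k ih =>
          rw [Function.iterate_succ_apply', Function.iterate_succ_apply', ih]
          exact step _ (notCe p hpC k) (nz p hpM k)
      rcases Nat.eq_zero_or_pos (i + j) with hij | hij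
      · have hi : i = 0 := by omega
        have hj : j = 0 := by omega
        subst hi; subst hj
        simp only [Function.iterate_zero_apply] at hEq
        exact hne hEq
      · set u : Fin n → Fin n := t^[j] ∘ te^[i] with hu
        have huT : u ∈ T := by
          rcases Nat.eq_zero_or_pos i with hi | hi
          · subst hi
            have hj : 1 ≤ j := by omega
            simpa [hu] using iterMemT hclosed ht j hj
          rcases Nat.eq_zero_or_pos j with hj | hj
          · subst hj
            simpa [hu] using iterMemT hclosed hte i hi
          · exact hclosed _ (iterMemT hclosed hte i hi) _ (iterMemT hclosed ht j hj)
        have h1 : u p₁ = t^[j] (s^[i] p₁) := by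
          simp only [hu, Function.comp_apply, agree p₁ hp₁C hp₁M i]
        have h2 : u p₂ = t^[j] (s^[i] p₂) := by
          simp only [hu, Function.comp_apply, agree p₂ hp₂C hp₂M i]
        exact hfoc u huT p₁ p₂ hcoll
          ⟨hne, by rw [h1, h2, hEq], by rw [h1]; exact hMem⟩
  refine ⟨key, ?_⟩
  rintro (⟨q, qe, rfl, rfl⟩ | ⟨q, qe, hq, hqe, hsq, hsqe, rfl, rfl⟩)
  · rcases key with h | h
    · exact orbitEqOfMem (memOrbitSelf s q) (h (memOrbitSelf s q))
    · exact (orbitEqOfMem (memOrbitSelf s qe) (h (memOrbitSelf s qe))).symm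
  · have fixn1 : ∀ k : ℕ, s^[k] (⟨n - 1, by omega⟩ : Fin n) = ⟨n - 1, by omega⟩ :=
      fun k => Function.iterate_fixed hsn1 k
    have root : ∀ r r' : Fin n, ¬ OnCycle n s r' → s r = (⟨n - 1, by omega⟩ : Fin n) →
        s r' = (⟨n - 1, by omega⟩ : Fin n) → treeOf n s r ⊆ treeOf n s r' → r = r' := by
      intro r r' hr' hsr hsr' hsub
      obtain ⟨i, hi⟩ := hsub (memTreeSelf s r)
      cases i with
      | zero => exact hi
      | succ i =>
        exfalso
        rw [Function.iterate_succ_apply, hsr, fixn1] at hi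
        exact hr' ⟨1, le_refl 1, by rw [Function.iterate_one, hsr', hi]⟩
    rcases key with h | h
    · rw [root q qe hqe hsq hsqe h]
    · rw [root qe q hq hsqe hsq h]
end

section
/- For every n ≥ 6 there exist a finite alphabet Σ and a bifix-free language L ⊆ Σ* such that the set of left quotients {L.w : w ∈ Σ*} has exactly n elements and the syntactic complexity of L is exactly (n−1)^{n−3} + (n−2)^{n−3} + (n−3)·2^{n−3}. -/
/-- The syntactic congruence of `L` on nonempty words:
`u ≈ v` iff for all words `x, y`, `xuy ∈ L ↔ xvy ∈ L`. -/
def synSetoid {σ : Type*} (L : Set (List σ)) : Setoid {w : List σ // w ≠ []} where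
  r u v := ∀ x y : List σ, x ++ u.val ++ y ∈ L ↔ x ++ v.val ++ y ∈ L
  iseqv := ⟨fun _ _ _ => Iff.rfl, fun h x y => (h x y).symm,
    fun h₁ h₂ x y => (h₁ x y).trans (h₂ x y)⟩

/-- The syntactic complexity of `L`: the number of classes of the syntactic
congruence on nonempty words. -/
noncomputable def synComplexity {σ : Type*} (L : Set (List σ)) : ℕ :=
  Nat.card (Quotient (synSetoid L))

/-!
The witness is the automaton whose alphabet is the Brzozowski–Szykuła semigroup `W` itself, the
transformations satisfying `Bifix.IsTransformation`. Since `W` is closed under composition and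
every element of `W` is a letter, the transition semigroup of the automaton is `W`; the automaton is
minimal, so its syntactic semigroup is its transition semigroup. An element of `W` is determined by
its values on `init` and on the `n - 3` middle states, and the three shapes allowed for it are
counted by `(n-1)^(n-3)`, `(n-2)^(n-3)` and `(n-3)·2^(n-3)`. Prefix-freeness holds because every
nonempty word leads `final` to `sink`, suffix-freeness because no word leads back to `init` and a
transformation sending `init` to `final` sends no other state there.
-/

namespace DFA

variable {α σ : Type*} (M : DFA α σ)

def transformation (w : List α) : σ → σ := fun s => M.evalFrom s w

def transitionSemigroup : Set (σ → σ) :=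
  Set.range fun w : {w : List α // w ≠ []} => M.transformation w.1

theorem eval_append (x y : List α) : M.eval (x ++ y) = M.transformation y (M.eval x) :=
  M.evalFrom_of_append _ x y

theorem append_append_mem_accepts_iff (x u y : List α) :
    x ++ u ++ y ∈ M.accepts ↔ y ∈ M.acceptsFrom (M.transformation u (M.eval x)) := by
  rw [mem_accepts, mem_acceptsFrom, eval_append, eval_append]
  rfl

theorem ncard_leftQuotients [Finite σ] (hreach : Function.Surjective M.eval)
    (hsep : Function.Injective M.acceptsFrom) :
    {S : Set (List α) | ∃ w, S = leftQuotient M.accepts w}.ncard = Nat.card σ := by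
  have hrange : {S : Set (List α) | ∃ w, S = leftQuotient M.accepts w} =
      Set.range (M.acceptsFrom ∘ M.eval) :=
    Set.ext fun S => exists_congr fun w => by
      rw [eq_comm, Function.comp_apply, ← Language.leftQuotient_accepts_apply]
      rfl
  rw [hrange, hreach.range_comp]
  exact Set.ncard_range_of_injective hsep

theorem synSetoid_accepts_eq_ker (hreach : Function.Surjective M.eval)
    (hsep : Function.Injective M.acceptsFrom) :
    synSetoid (M.accepts : Set (List α)) =
      Setoid.ker fun u : {w : List α // w ≠ []} => M.transformation u.1 := by
  ext u v
  change (∀ x y, x ++ u.1 ++ y ∈ M.accepts ↔ x ++ v.1 ++ y ∈ M.accepts) ↔ _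
  simp only [append_append_mem_accepts_iff, Setoid.ker_def]
  refine ⟨fun h => funext fun s => ?_, fun h x y => by rw [h]⟩
  obtain ⟨x, rfl⟩ := hreach s
  exact hsep (Set.ext (h x))

theorem synComplexity_accepts (hreach : Function.Surjective M.eval)
    (hsep : Function.Injective M.acceptsFrom) :
    synComplexity (M.accepts : Set (List α)) = Nat.card M.transitionSemigroup := by
  unfold synComplexity
  rw [M.synSetoid_accepts_eq_ker hreach hsep]
  exact Nat.card_congr (Setoid.quotientKerEquivRange _)

end DFA

namespace Bifix

/-- `init, mid i, final, sink` are the states `0, i + 1, n - 2, n - 1` of the paper, `n = k + 3`. -/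
inductive State (k : ℕ)
  | init
  | mid (i : Fin k)
  | final
  | sink
  deriving DecidableEq, Fintype

variable {k : ℕ}

open State

theorem card_state : Fintype.card (State k) = k + 3 := by
  rw [← Fintype.card_congr (proxy_equiv% (State k))]
  simp
  omega

structure IsTransformation (t : State k → State k) : Prop where
  map_final : t final = sink
  map_sink : t sink = sink
  ne_init (q : State k) : t q ≠ init
  trichotomy : t init = sink ∨ (t init = final ∧ ∀ i, t (mid i) ≠ final) ∨
    ((∃ j, t init = mid j) ∧ ∀ i, t (mid i) = final ∨ t (mid i) = sink)

namespace IsTransformation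

variable {s t : State k → State k}

theorem comp (hs : IsTransformation s) (ht : IsTransformation t) :
    IsTransformation (s ∘ t) where
  map_final := by simp [ht.map_final, hs.map_sink]
  map_sink := by simp [ht.map_sink, hs.map_sink]
  ne_init q := hs.ne_init (t q)
  trichotomy := by
    rcases ht.trichotomy with h | ⟨h, -⟩ | ⟨-, hmid⟩
    · simp [h, hs.map_sink]
    · simp [h, hs.map_final]
    have hsink (i : Fin k) : s (t (mid i)) = sink := by
      rcases hmid i with h | h <;> simp [h, hs.map_final, hs.map_sink]
    simp only [Function.comp_apply]
    obtain ⟨v, hv⟩ : ∃ v, s (t init) = v := ⟨_, rfl⟩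
    cases v with
    | init => exact absurd hv (hs.ne_init _)
    | mid j => exact Or.inr (Or.inr ⟨⟨j, hv⟩, fun i => Or.inr (hsink i)⟩)
    | final => exact Or.inr (Or.inl ⟨hv, fun i => by simp [hsink]⟩)
    | sink => exact Or.inl hv

theorem eq_init_of_map_eq_final (ht : IsTransformation t) (hinit : t init = final)
    {q : State k} (hq : t q = final) : q = init := by
  rcases ht.trichotomy with h | ⟨-, hmid⟩ | ⟨⟨j, h⟩, -⟩
  · exact absurd (hinit.symm.trans h) nofun
  · cases q with
    | init => rfl
    | mid i => exact absurd hq (hmid i)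
    | final => exact absurd (hq.symm.trans ht.map_final) nofun
    | sink => exact absurd (hq.symm.trans ht.map_sink) nofun
  · exact absurd (hinit.symm.trans h) nofun

end IsTransformation

abbrev Letter (k : ℕ) := {t : State k → State k // IsTransformation t}

def extend (v : State k) (g : Fin k → State k) : State k → State k
  | init => v
  | mid i => g i
  | final => sink
  | sink => sink

def restrict (t : State k → State k) : State k × (Fin k → State k) :=
  (t init, t ∘ mid)

open Finset in
def transformationData (k : ℕ) : Finset (State k × (Fin k → State k)) :=
  {sink} ×ˢ Fintype.piFinset (fun _ => {init}ᶜ) ∪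
    {final} ×ˢ Fintype.piFinset (fun _ => {init, final}ᶜ) ∪
    univ.image mid ×ˢ Fintype.piFinset (fun _ => {final, sink})

theorem mem_transformationData {v : State k} {g : Fin k → State k} :
    (v, g) ∈ transformationData k ↔ (v = sink ∧ ∀ i, g i ≠ init) ∨
      (v = final ∧ ∀ i, g i ≠ init ∧ g i ≠ final) ∨
      ((∃ j, mid j = v) ∧ ∀ i, g i = final ∨ g i = sink) := by
  simp [transformationData, and_comm, eq_comm]

theorem isTransformation_extend {v : State k} {g : Fin k → State k}
    (h : (v, g) ∈ transformationData k) : IsTransformation (extend v g) := by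
  rw [mem_transformationData] at h
  have hv : v ≠ init := by
    rcases h with ⟨rfl, -⟩ | ⟨rfl, -⟩ | ⟨⟨j, rfl⟩, -⟩ <;> nofun
  have hg (i : Fin k) : g i ≠ init := by
    rcases h with ⟨-, h⟩ | ⟨-, h⟩ | ⟨-, h⟩
    · exact h i
    · exact (h i).1
    · rcases h i with h | h <;> simp [h]
  refine ⟨rfl, rfl, fun q => ?_, ?_⟩
  · cases q with
    | init => exact hv
    | mid i => exact hg i
    | final | sink => nofun
  · rcases h with ⟨rfl, -⟩ | ⟨rfl, h⟩ | ⟨⟨j, rfl⟩, h⟩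
    · exact Or.inl rfl
    · exact Or.inr (Or.inl ⟨rfl, fun i => (h i).2⟩)
    · exact Or.inr (Or.inr ⟨⟨j, rfl⟩, h⟩)

theorem bijOn_restrict :
    Set.BijOn restrict {t : State k → State k | IsTransformation t} (transformationData k) := by
  refine ⟨fun t ht => ?_, fun t ht t' ht' h => ?_, fun d hd => ?_⟩
  · rw [Finset.mem_coe, restrict, mem_transformationData]
    rcases ht.trichotomy with h | ⟨h, hmid⟩ | ⟨⟨j, h⟩, hmid⟩
    · exact Or.inl ⟨h, fun i => ht.ne_init _⟩
    · exact Or.inr (Or.inl ⟨h, fun i => ⟨ht.ne_init _, hmid i⟩⟩)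
    · exact Or.inr (Or.inr ⟨⟨j, h.symm⟩, hmid⟩)
  · obtain ⟨hinit, hmid⟩ := Prod.ext_iff.1 h
    funext q
    cases q with
    | init => exact hinit
    | mid i => exact congrFun hmid i
    | final => exact ht.map_final.trans ht'.map_final.symm
    | sink => exact ht.map_sink.trans ht'.map_sink.symm
  · exact ⟨extend d.1 d.2, isTransformation_extend hd, rfl⟩

theorem card_transformationData :
    (transformationData k).card = (k + 2) ^ k + (k + 1) ^ k + k * 2 ^ k := by
  rw [transformationData, Finset.card_union_of_disjoint, Finset.card_union_of_disjoint]
  · simp [Finset.card_compl, card_state, Finset.card_image_of_injective _ fun _ _ => mid.inj]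
  · exact Finset.disjoint_product.2 (Or.inl (by simp))
  · refine Finset.disjoint_union_left.2 ⟨?_, ?_⟩ <;>
      exact Finset.disjoint_product.2 (Or.inl (by simp))

theorem card_letter : Nat.card (Letter k) = (k + 2) ^ k + (k + 1) ^ k + k * 2 ^ k := by
  rw [← card_transformationData, ← Nat.card_eq_finsetCard]
  exact Nat.card_congr bijOn_restrict.equiv

def dfa (k : ℕ) : DFA (Letter k) (State k) where
  step q t := t.1 q
  start := init
  accept := {final}

theorem isTransformation_transformation {w : List (Letter k)} (hw : w ≠ []) :
    IsTransformation ((dfa k).transformation w) := by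
  induction w with
  | nil => exact absurd rfl hw
  | cons t w ih =>
    rcases eq_or_ne w [] with rfl | hw
    · exact t.2
    · exact (ih hw).comp t.2

theorem transitionSemigroup_dfa :
    (dfa k).transitionSemigroup = {t | IsTransformation t} := by
  refine Set.Subset.antisymm ?_ fun t ht => ⟨⟨[⟨t, ht⟩], List.cons_ne_nil _ _⟩, rfl⟩
  rintro _ ⟨⟨w, hw⟩, rfl⟩
  exact isTransformation_transformation hw

def toFinal : Letter k :=
  ⟨extend final fun _ => sink, isTransformation_extend (by simp [mem_transformationData])⟩

def select (p : Fin k) : Letter k :=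
  ⟨extend (mid p) fun i => if i = p then final else sink,
    isTransformation_extend (by simp [mem_transformationData, em])⟩

theorem eval_surjective : Function.Surjective (dfa k).eval
  | init => ⟨[], rfl⟩
  | mid p => ⟨[select p], rfl⟩
  | final => ⟨[toFinal], rfl⟩
  | sink => ⟨[toFinal, toFinal], rfl⟩

theorem exists_mem_acceptsFrom_iff {q : State k} (hq : q ≠ sink) :
    ∃ y, ∀ q', y ∈ (dfa k).acceptsFrom q' ↔ q' = q := by
  cases q with
  | init =>
    refine ⟨[toFinal], fun q' => ?_⟩
    cases q' <;> simp [DFA.mem_acceptsFrom, dfa, toFinal, extend]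
  | mid p =>
    refine ⟨[select p], fun q' => ?_⟩
    cases q' <;> simp [DFA.mem_acceptsFrom, dfa, select, extend]
  | final => exact ⟨[], fun q' => by simp [DFA.mem_acceptsFrom, dfa]⟩
  | sink => exact absurd rfl hq

theorem acceptsFrom_injective : Function.Injective (dfa k).acceptsFrom := by
  intro q q' h
  by_contra hne
  wlog hq : q ≠ sink generalizing q q'
  · exact this h.symm (Ne.symm hne) fun hq' => hne ((not_not.1 hq).trans hq'.symm)
  obtain ⟨y, hy⟩ := exists_mem_acceptsFrom_iff hq
  exact hne ((hy q').1 (h ▸ (hy q).2 rfl)).symm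

theorem prefixFree_accepts : PrefixFree (dfa k).accepts := by
  rintro u hu _ hv ⟨y, rfl⟩
  rcases eq_or_ne y [] with rfl | hy
  · exact (List.append_nil u).symm
  have : (dfa k).eval (u ++ y) = sink := by
    rw [DFA.eval_append, (DFA.mem_accepts _).1 hu]
    exact (isTransformation_transformation hy).map_final
  exact absurd ((DFA.mem_accepts _).1 hv) (by rw [this]; nofun)

theorem suffixFree_accepts : SuffixFree (dfa k).accepts := by
  rintro u hu _ hv ⟨x, rfl⟩
  rcases eq_or_ne x [] with rfl | hx
  · rfl
  have hu_ne : u ≠ [] := by rintro rfl; exact absurd hu nofun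
  have hxu : (dfa k).transformation u ((dfa k).eval x) = final := by
    rw [← DFA.eval_append]; exact hv
  exact absurd ((isTransformation_transformation hu_ne).eq_init_of_map_eq_final hu hxu)
    ((isTransformation_transformation hx).ne_init init)

end Bifix

theorem stmt17 (n : ℕ) (hn : 6 ≤ n) :
    ∃ (σ : Type) (_ : Fintype σ) (L : Set (List σ)),
      PrefixFree L ∧ SuffixFree L ∧
      {S : Set (List σ) | ∃ w : List σ, S = leftQuotient L w}.ncard = n ∧
      synComplexity L = (n - 1) ^ (n - 3) + (n - 2) ^ (n - 3) + (n - 3) * 2 ^ (n - 3) := by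
  obtain ⟨k, rfl⟩ : ∃ k, n = k + 3 := ⟨n - 3, by omega⟩
  refine ⟨Bifix.Letter k, Fintype.ofFinite _, (Bifix.dfa k).accepts, Bifix.prefixFree_accepts,
    Bifix.suffixFree_accepts, ?_, ?_⟩
  · rw [DFA.ncard_leftQuotients _ Bifix.eval_surjective Bifix.acceptsFrom_injective,
      Nat.card_eq_fintype_card, Bifix.card_state]
  · rw [DFA.synComplexity_accepts _ Bifix.eval_surjective Bifix.acceptsFrom_injective,
      Bifix.transitionSemigroup_dfa]
    exact Bifix.card_letter
end
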